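/- arXiv:2501.01502 — 7 statements merged into one kernel-verified Lean document; each statement's English description precedes it below -/
import Mathlib

section
/- Let g₁ and g₂ be monic polynomials in F[x] such that the product g₁·g₂ divides x^{2n} − 1. If e₁ ∈ R is an idempotent generating the ideal of R generated by the image of (x^{2n} − 1)/g₁, and e₂ ∈ R is an idempotent generating the ideal generated by the image of (x^{2n} − 1)/g₂, then e₁ + e₂ is an idempotent of R and it generates the ideal of R generated by the image of (x^{2n} − 1)/(g₁·g₂). -/
open Polynomial

/-- `Rq F N` is the quotient ring `F[x]/(x^N - 1)`. -/
abbrev Rq (F : Type*) [Field F] (N : ℕ) : Type _ :=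
  F[X] ⧸ Ideal.span ({X ^ N - 1} : Set F[X])

/-- The canonical projection `F[x] → F[x]/(x^N - 1)`. -/
noncomputable abbrev mkq (F : Type*) [Field F] (N : ℕ) : F[X] →+* Rq F N :=
  Ideal.Quotient.mk (Ideal.span ({X ^ N - 1} : Set F[X]))

/-!
Write `x^{2n} - 1 = g₁ g₂ h`. In `R` the generators are `g₂ h` and `g₁ h`, whose product is a
multiple of `x^{2n} - 1`, so `e₁ e₂ = 0` and `e₁ + e₂` is an idempotent generating
`(e₁) + (e₂) = (g₂ h, g₁ h)`. Since `x^{2n} - 1` is separable, `g₁` and `g₂` are coprime, and this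
ideal is `(h)`.
-/

namespace Ideal

variable {S : Type*} [CommRing S]

theorem span_singleton_mul_sup_of_isCoprime {a b : S} (hab : IsCoprime a b) (c : S) :
    span {b * c} ⊔ span {a * c} = span {c} := by
  rw [← span_singleton_mul_span_singleton, ← span_singleton_mul_span_singleton, ← sup_mul,
    sup_comm, (sup_eq_top_iff_isCoprime a b).2 hab, top_mul]

theorem mul_eq_zero_of_mem_span_singleton {a b c e₁ e₂ : S} (habc : a * b * c = 0)
    (he₁ : e₁ ∈ span {b * c}) (he₂ : e₂ ∈ span {a * c}) : e₁ * e₂ = 0 := by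
  obtain ⟨x, rfl⟩ := mem_span_singleton'.1 he₁
  obtain ⟨y, rfl⟩ := mem_span_singleton'.1 he₂
  linear_combination (x * y * c) * habc

end Ideal

namespace IsIdempotentElem

variable {S : Type*} [CommRing S] {e₁ e₂ : S}

theorem span_singleton_add_of_mul_eq_zero (he₁ : IsIdempotentElem e₁)
    (he₂ : IsIdempotentElem e₂) (h : e₁ * e₂ = 0) :
    Ideal.span {e₁ + e₂} = Ideal.span {e₁} ⊔ Ideal.span {e₂} := by
  refine le_antisymm ?_ (sup_le ?_ ?_)
  · rw [Ideal.span_singleton_le_iff_mem]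
    exact Submodule.add_mem_sup (Ideal.mem_span_singleton_self _)
      (Ideal.mem_span_singleton_self _)
  · rw [Ideal.span_singleton_le_iff_mem, Ideal.mem_span_singleton']
    exact ⟨e₁, by linear_combination he₁.eq + h⟩
  · rw [Ideal.span_singleton_le_iff_mem, Ideal.mem_span_singleton']
    exact ⟨e₂, by linear_combination he₂.eq + h⟩

theorem add_of_span_singleton_eq {a b c : S} (hab : IsCoprime a b) (habc : a * b * c = 0)
    (he₁ : IsIdempotentElem e₁) (he₂ : IsIdempotentElem e₂)
    (hgen₁ : Ideal.span {e₁} = Ideal.span {b * c})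
    (hgen₂ : Ideal.span {e₂} = Ideal.span {a * c}) :
    IsIdempotentElem (e₁ + e₂) ∧ Ideal.span {e₁ + e₂} = Ideal.span {c} := by
  have horth : e₁ * e₂ = 0 := Ideal.mul_eq_zero_of_mem_span_singleton habc
    (hgen₁ ▸ Ideal.mem_span_singleton_self e₁) (hgen₂ ▸ Ideal.mem_span_singleton_self e₂)
  refine ⟨he₁.add he₂ (by rw [mul_comm e₂, horth, add_zero]), ?_⟩
  rw [span_singleton_add_of_mul_eq_zero he₁ he₂ horth, hgen₁, hgen₂,
    Ideal.span_singleton_mul_sup_of_isCoprime hab]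

end IsIdempotentElem

theorem stmt_0_general {F : Type*} [Field F] {n : ℕ}
    (hchar : ((2 * n : ℕ) : F) ≠ 0)
    (g₁ g₂ : F[X]) (hg₁ : g₁.Monic) (hg₂ : g₂.Monic)
    (hdvd : g₁ * g₂ ∣ X ^ (2 * n) - 1)
    (e₁ e₂ : Rq F (2 * n))
    (he₁ : e₁ * e₁ = e₁) (he₂ : e₂ * e₂ = e₂)
    (hgen₁ : Ideal.span {e₁} = Ideal.span {mkq F (2 * n) ((X ^ (2 * n) - 1) /ₘ g₁)})
    (hgen₂ : Ideal.span {e₂} = Ideal.span {mkq F (2 * n) ((X ^ (2 * n) - 1) /ₘ g₂)}) :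
    (e₁ + e₂) * (e₁ + e₂) = e₁ + e₂ ∧
    Ideal.span {e₁ + e₂} = Ideal.span {mkq F (2 * n) ((X ^ (2 * n) - 1) /ₘ (g₁ * g₂))} := by
  have hsep : (X ^ (2 * n) - 1 : F[X]).Separable := by
    simpa using separable_X_pow_sub_C (1 : F) hchar one_ne_zero
  have hcop : IsCoprime g₁ g₂ := (hsep.of_dvd hdvd).isCoprime
  obtain ⟨h, hP⟩ := hdvd
  have hzero : mkq F (2 * n) (g₁ * g₂ * h) = 0 := by
    rw [← hP]
    exact Ideal.Quotient.eq_zero_iff_mem.2 (Ideal.mem_span_singleton_self _)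
  have hq₁ : (X ^ (2 * n) - 1 : F[X]) /ₘ g₁ = g₂ * h := by
    rw [hP, mul_assoc, mul_divByMonic_cancel_left _ hg₁]
  have hq₂ : (X ^ (2 * n) - 1 : F[X]) /ₘ g₂ = g₁ * h := by
    rw [hP, mul_comm g₁, mul_assoc, mul_divByMonic_cancel_left _ hg₂]
  have hq : (X ^ (2 * n) - 1 : F[X]) /ₘ (g₁ * g₂) = h := by
    rw [hP, mul_divByMonic_cancel_left _ (hg₁.mul hg₂)]
  rw [hq₁, map_mul] at hgen₁
  rw [hq₂, map_mul] at hgen₂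
  rw [map_mul, map_mul] at hzero
  rw [hq]
  exact IsIdempotentElem.add_of_span_singleton_eq (hcop.map _) hzero he₁ he₂ hgen₁ hgen₂

theorem stmt_0 {F : Type*} [Field F] {n : ℕ} (hn : 1 ≤ n)
    (hchar : ((2 * n : ℕ) : F) ≠ 0)
    (g₁ g₂ : F[X]) (hg₁ : g₁.Monic) (hg₂ : g₂.Monic)
    (hdvd : g₁ * g₂ ∣ X ^ (2 * n) - 1)
    (e₁ e₂ : Rq F (2 * n))
    (he₁ : e₁ * e₁ = e₁) (he₂ : e₂ * e₂ = e₂)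
    (hgen₁ : Ideal.span {e₁} = Ideal.span {mkq F (2 * n) ((X ^ (2 * n) - 1) /ₘ g₁)})
    (hgen₂ : Ideal.span {e₂} = Ideal.span {mkq F (2 * n) ((X ^ (2 * n) - 1) /ₘ g₂)}) :
    (e₁ + e₂) * (e₁ + e₂) = e₁ + e₂ ∧
    Ideal.span {e₁ + e₂} = Ideal.span {mkq F (2 * n) ((X ^ (2 * n) - 1) /ₘ (g₁ * g₂))} :=
  stmt_0_general hchar g₁ g₂ hg₁ hg₂ hdvd e₁ e₂ he₁ he₂ hgen₁ hgen₂
end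

section
/- Let h be a monic divisor of x^M − 1 in F[x], and let φ : F[x]/(x^M − 1) → F[x]/(x^{2n} − 1) be the F-algebra homomorphism induced by x ↦ x^ℓ. Then the polynomial h(x^ℓ) divides x^{2n} − 1, and if ê ∈ F[x]/(x^M − 1) is an idempotent generating the ideal generated by the image of (x^M − 1)/h, then φ(ê) is an idempotent of F[x]/(x^{2n} − 1) generating the ideal generated by the image of (x^{2n} − 1)/h(x^ℓ). -/
open Polynomial

/-!
Substituting `x ↦ x^ℓ` is a ring map `F[x] → F[x]` sending `x^M - 1` to `x^{2n} - 1`, so it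
carries the factorisation `x^M - 1 = h · g` to `x^{2n} - 1 = h(x^ℓ) · g(x^ℓ)`, and it induces `φ`
on the quotients. Ring maps preserve idempotents and principal ideals, so `φ(ê)` is idempotent
and generates the ideal of `φ(g) = g(x^ℓ)`, the cofactor of `h(x^ℓ)`.
-/

namespace Polynomial

variable {R : Type*} [CommRing R]

theorem X_pow_sub_one_comp_X_pow (m k : ℕ) :
    (X ^ m - 1 : R[X]).comp (X ^ k) = X ^ (m * k) - 1 := by
  simp [sub_comp, ← pow_mul, mul_comm]

theorem comp_dvd_comp {p q : R[X]} (hpq : p ∣ q) (r : R[X]) : p.comp r ∣ q.comp r := by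
  obtain ⟨s, rfl⟩ := hpq
  exact ⟨s.comp r, mul_comp p s r⟩

theorem Monic.divByMonic_comp {p q r : R[X]} (hp : p.Monic) (hpr : (p.comp r).Monic)
    (hpq : p ∣ q) : (q /ₘ p).comp r = q.comp r /ₘ p.comp r := by
  obtain ⟨s, rfl⟩ := hpq
  rw [mul_divByMonic_cancel_left _ hp, mul_comp, mul_divByMonic_cancel_left _ hpr]

end Polynomial

theorem AlgHom.apply_mk_eq_mk_comp {R : Type*} [CommRing R] {I J : Ideal R[X]}
    (φ : R[X] ⧸ I →ₐ[R] R[X] ⧸ J) {q : R[X]}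
    (hq : φ (Ideal.Quotient.mk I X) = Ideal.Quotient.mk J q) (p : R[X]) :
    φ (Ideal.Quotient.mk I p) = Ideal.Quotient.mk J (p.comp q) := by
  have hext : φ.comp (Ideal.Quotient.mkₐ R I) = (Ideal.Quotient.mkₐ R J).comp (aeval q) :=
    Polynomial.algHom_ext (by simpa using hq)
  simpa [comp_eq_aeval] using congrArg (· p) hext

theorem Ideal.span_singleton_apply_eq_of_eq {R S F : Type*} [Semiring R] [Semiring S]
    [FunLike F R S] [RingHomClass F R S] (f : F) {a b : R} (hab : span {a} = span {b}) :
    span {f a} = span {f b} := by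
  simpa [Ideal.map_span] using congrArg (Ideal.map f) hab

theorem stmt_5_general {F : Type*} [Field F] {n ℓ M : ℕ}
    (hℓpos : 0 < ℓ) (hℓdvd : ℓ ∣ 2 * n) (hM : M = 2 * n / ℓ)
    (h : F[X]) (hmonic : h.Monic) (hdvd : h ∣ X ^ M - 1)
    (φ : Rq F M →ₐ[F] Rq F (2 * n))
    (hφ : φ (mkq F M X) = mkq F (2 * n) (X ^ ℓ)) :
    h.comp (X ^ ℓ) ∣ X ^ (2 * n) - 1 ∧
    ∀ ehat : Rq F M, ehat * ehat = ehat →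
      Ideal.span {ehat} = Ideal.span {mkq F M ((X ^ M - 1) /ₘ h)} →
      φ ehat * φ ehat = φ ehat ∧
      Ideal.span {φ ehat} =
        Ideal.span {mkq F (2 * n) ((X ^ (2 * n) - 1) /ₘ h.comp (X ^ ℓ))} := by
  have hcomp : (X ^ M - 1 : F[X]).comp (X ^ ℓ) = X ^ (2 * n) - 1 := by
    rw [X_pow_sub_one_comp_X_pow, hM, Nat.div_mul_cancel hℓdvd]
  have hmonic_comp : (h.comp (X ^ ℓ)).Monic :=
    hmonic.comp (monic_X_pow ℓ) (by simp [hℓpos.ne'])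
  refine ⟨hcomp ▸ comp_dvd_comp hdvd _, fun ehat hidem hspan => ⟨by rw [← map_mul, hidem], ?_⟩⟩
  have hquot : (X ^ (2 * n) - 1 : F[X]) /ₘ h.comp (X ^ ℓ) = ((X ^ M - 1) /ₘ h).comp (X ^ ℓ) := by
    rw [← hcomp, hmonic.divByMonic_comp hmonic_comp hdvd]
  rw [hquot, ← φ.apply_mk_eq_mk_comp hφ]
  exact Ideal.span_singleton_apply_eq_of_eq φ hspan

theorem stmt_5 {F : Type*} [Field F] {n ℓ M : ℕ} (hn : 1 ≤ n)
    (hchar : ((2 * n : ℕ) : F) ≠ 0)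
    (hℓpos : 0 < ℓ) (hℓdvd : ℓ ∣ 2 * n) (hM : M = 2 * n / ℓ)
    (h : F[X]) (hmonic : h.Monic) (hdvd : h ∣ X ^ M - 1)
    (φ : Rq F M →ₐ[F] Rq F (2 * n))
    (hφ : φ (mkq F M X) = mkq F (2 * n) (X ^ ℓ)) :
    h.comp (X ^ ℓ) ∣ X ^ (2 * n) - 1 ∧
    ∀ ehat : Rq F M, ehat * ehat = ehat →
      Ideal.span {ehat} = Ideal.span {mkq F M ((X ^ M - 1) /ₘ h)} →
      φ ehat * φ ehat = φ ehat ∧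
      Ideal.span {φ ehat} =
        Ideal.span {mkq F (2 * n) ((X ^ (2 * n) - 1) /ₘ h.comp (X ^ ℓ))} :=
  stmt_5_general hℓpos hℓdvd hM h hmonic hdvd φ hφ
end

section
/- Let h be a self-reciprocal monic irreducible divisor of x^M − 1 in F[x], and let p be a monic irreducible divisor of x^{2n} − 1. If p divides h(x^ℓ), then the reciprocal polynomial p* also divides h(x^ℓ). -/
/-!
The reciprocal map is multiplicative and commutes with `x ↦ x ^ ℓ`, so it sends the divisor `p`
of `h(x^ℓ)` to a divisor of `h(x^ℓ)* = h*(x^ℓ) = h(x^ℓ)`.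
-/

open Polynomial

/-- The reciprocal polynomial `p*(x) = p(0)⁻¹ · x^(deg p) · p(1/x)` of `p`. -/
noncomputable def recip {F : Type*} [Field F] (p : F[X]) : F[X] :=
  C (p.coeff 0)⁻¹ * p.reverse

lemma revAt_mul_mul (N i ℓ : ℕ) : revAt (N * ℓ) (i * ℓ) = revAt N i * ℓ := by
  rcases le_or_gt i N with hi | hi
  · rw [revAt_le hi, revAt_le (Nat.mul_le_mul_right ℓ hi), Nat.sub_mul]
  · rcases Nat.eq_zero_or_pos ℓ with rfl | hℓ
    · simp
    · rw [revAt_eq_self_of_lt hi, revAt_eq_self_of_lt (Nat.mul_lt_mul_of_pos_right hi hℓ)]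

lemma reflect_expand {R : Type*} [CommSemiring R] (N ℓ : ℕ) (f : R[X]) :
    reflect (N * ℓ) (expand R ℓ f) = expand R ℓ (reflect N f) := by
  induction f using Polynomial.induction_on' with
  | add f g hf hg => rw [map_add, reflect_add, reflect_add, map_add, hf, hg]
  | monomial i c =>
    rw [expand_monomial, ← C_mul_X_pow_eq_monomial, ← C_mul_X_pow_eq_monomial, reflect_C_mul_X_pow,
      reflect_C_mul_X_pow, revAt_mul_mul, C_mul_X_pow_eq_monomial, C_mul_X_pow_eq_monomial,
      expand_monomial]

lemma reverse_expand {R : Type*} [CommSemiring R] (ℓ : ℕ) (f : R[X]) :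
    (expand R ℓ f).reverse = expand R ℓ f.reverse := by
  rw [reverse, reverse, natDegree_expand, reflect_expand]

lemma recip_mul {F : Type*} [Field F] (p q : F[X]) :
    recip (p * q) = recip p * recip q := by
  rw [recip, recip, recip, reverse_mul_of_domain, mul_coeff_zero, mul_inv, C_mul]
  ring

lemma recip_dvd_recip {F : Type*} [Field F] {p q : F[X]} (hpq : p ∣ q) : recip p ∣ recip q := by
  obtain ⟨r, rfl⟩ := hpq
  exact ⟨recip r, recip_mul p r⟩

lemma recip_expand {F : Type*} [Field F] {ℓ : ℕ} (hℓ : 0 < ℓ) (f : F[X]) :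
    recip (expand F ℓ f) = expand F ℓ (recip f) := by
  rw [recip, recip, map_mul, expand_C, reverse_expand, coeff_expand hℓ, if_pos (dvd_zero ℓ),
    Nat.zero_div]

theorem stmt_7_general {F : Type*} [Field F] {ℓ : ℕ} (hℓpos : 0 < ℓ) (h : F[X]) (hself : recip h = h)
    (p : F[X]) (hp : p ∣ h.comp (X ^ ℓ)) :
    recip p ∣ h.comp (X ^ ℓ) := by
  rw [← expand_eq_comp_X_pow] at hp ⊢
  simpa only [recip_expand hℓpos, hself] using recip_dvd_recip hp

theorem stmt_7 {F : Type*} [Field F] {n ℓ M : ℕ} (hn : 1 ≤ n)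
    (hchar : ((2 * n : ℕ) : F) ≠ 0)
    (hℓpos : 0 < ℓ) (hℓdvd : ℓ ∣ 2 * n) (hM : M = 2 * n / ℓ)
    (h : F[X]) (hmonic : h.Monic) (hirr : Irreducible h) (hdvd : h ∣ X ^ M - 1)
    (hself : recip h = h)
    (p : F[X]) (hpmonic : p.Monic) (hpirr : Irreducible p)
    (hpdvd : p ∣ X ^ (2 * n) - 1)
    (hp : p ∣ h.comp (X ^ ℓ)) :
    recip p ∣ h.comp (X ^ ℓ) :=
  stmt_7_general hℓpos h hself p hp
end

section
/- Let h be a monic divisor of x^M − 1 in F[x], let Ĉ_h denote the ideal of F[x]/(x^M − 1) generated by the image of h, and let Ω : F[x]/(x^M − 1) → F[Q_{4n}] be the F-algebra homomorphism sending the class of x to x^ℓ. Then the left ideal C of F[Q_{4n}] generated by the set Ω(Ĉ_h) satisfies dim_F C = 2·ℓ·(M − deg h) = 2·ℓ·dim_F Ĉ_h. -/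
open Polynomial

/-!
The element `Ω x = a ℓ` generates the cyclic subgroup of order `M` of `Q_{4n}`, whose left cosets
are represented by the `2ℓ` elements `a r`, `xa r` with `r < ℓ`. Writing `uᵢ` for these, the map
`(fᵢ) ↦ ∑ uᵢ * Ω fᵢ` from `(F[x]/(x^M - 1))^{2ℓ}` to `F[Q_{4n}]` is onto, and both spaces have
dimension `4n`, so it is bijective. As every element of `F[Q_{4n}]` is of the form `∑ uᵢ * Ω rᵢ`,
the left ideal generated by `Ω(Ĉ_h)` is `∑ uᵢ * Ω(Ĉ_h)`, of dimension `2ℓ · dim Ĉ_h`; finally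
`dim Ĉ_h = M - deg h` because the quotient by `Ĉ_h` is `F[x]/(h)`.
-/

namespace Polynomial

variable {K : Type*} [Field K]

theorem finrank_span_mk_of_dvd {f g : K[X]} (hf : f ≠ 0) (hgf : g ∣ f) :
    Module.finrank K
        ((Ideal.span {Ideal.Quotient.mk (Ideal.span {f}) g}).restrictScalars K) =
      f.natDegree - g.natDegree := by
  set I := Ideal.span {Ideal.Quotient.mk (Ideal.span {f}) g}
  have : Module.Finite K (K[X] ⧸ Ideal.span {f}) := (AdjoinRoot.powerBasis hf).finite
  have hI : I = (Ideal.span {g}).map (Ideal.Quotient.mkₐ K (Ideal.span {f})) := by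
    rw [Ideal.map_span, Set.image_singleton]; rfl
  have hquot : Module.finrank K ((K[X] ⧸ Ideal.span {f}) ⧸ I.restrictScalars K) =
      g.natDegree := by
    rw [(Submodule.Quotient.restrictScalarsEquiv K I).finrank_eq, hI,
      (DoubleQuot.quotQuotEquivQuotOfLEₐ K
        (Ideal.span_singleton_le_span_singleton.mpr hgf)).toLinearEquiv.finrank_eq,
      finrank_quotient_span_eq_natDegree]
  have := Submodule.finrank_quotient_add_finrank (I.restrictScalars K)
  rw [hquot, finrank_quotient_span_eq_natDegree] at this
  omega

end Polynomial

section SumMulLeft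

variable {K M A ι : Type*} [Field K] [AddCommGroup M] [Module K M] [Ring A] [Algebra K A]
  [Fintype ι]

def sumMulLeft (u : ι → A) (φ : M →ₗ[K] A) : (ι → M) →ₗ[K] A :=
  ∑ i, LinearMap.mulLeft K (u i) ∘ₗ φ ∘ₗ LinearMap.proj i

theorem sumMulLeft_apply (u : ι → A) (φ : M →ₗ[K] A) (f : ι → M) :
    sumMulLeft u φ f = ∑ i, u i * φ (f i) := by
  simp [sumMulLeft]

theorem sumMulLeft_single [DecidableEq ι] (u : ι → A) (φ : M →ₗ[K] A) (i : ι) (m : M) :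
    sumMulLeft u φ (Pi.single i m) = u i * φ m := by
  rw [sumMulLeft_apply, Finset.sum_eq_single i (fun j _ hj => by simp [hj]) (by simp),
    Pi.single_eq_same]

theorem injective_sumMulLeft_comp_subtype {u : ι → A} {φ : M →ₗ[K] A}
    (hinj : Function.Injective (sumMulLeft u φ)) (p : Submodule K M) :
    Function.Injective (sumMulLeft u (φ ∘ₗ p.subtype)) :=
  fun f g hfg => funext fun i => Subtype.ext <|
    congrFun (@hinj (fun i => f i) (fun i => g i) <| by simpa [sumMulLeft_apply] using hfg) i

variable {R : Type*} [Ring R] [Algebra K R] {u : ι → A} {Ω : R →ₐ[K] A}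

theorem mul_map_mem_range_sumMulLeft (hsurj : Function.Surjective (sumMulLeft u Ω.toLinearMap))
    {I : Ideal R} (a : A) {c : R} (hc : c ∈ I) :
    a * Ω c ∈ LinearMap.range (sumMulLeft u (Ω.toLinearMap ∘ₗ (I.restrictScalars K).subtype)) := by
  obtain ⟨r, rfl⟩ := hsurj a
  refine ⟨fun i => ⟨r i * c, I.mul_mem_left _ hc⟩, ?_⟩
  simp [sumMulLeft_apply, Finset.sum_mul, mul_assoc]

theorem span_image_eq_range_sumMulLeft (hsurj : Function.Surjective (sumMulLeft u Ω.toLinearMap))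
    (I : Ideal R) :
    (Ideal.span (Ω '' I)).restrictScalars K =
      LinearMap.range (sumMulLeft u (Ω.toLinearMap ∘ₗ (I.restrictScalars K).subtype)) := by
  apply le_antisymm
  · intro x hx
    induction hx using Submodule.span_induction with
    | mem x hx =>
      obtain ⟨c, hc, rfl⟩ := hx
      simpa using mul_map_mem_range_sumMulLeft hsurj 1 hc
    | zero => exact zero_mem _
    | add x y _ _ hx hy => exact add_mem hx hy
    | smul a x _ hx =>
      obtain ⟨f, rfl⟩ := hx
      rw [smul_eq_mul, sumMulLeft_apply, Finset.mul_sum]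
      exact Submodule.sum_mem _ fun i _ => by
        simpa [mul_assoc] using mul_map_mem_range_sumMulLeft hsurj (a * u i) (f i).2
  · rintro _ ⟨f, rfl⟩
    rw [Submodule.restrictScalars_mem, sumMulLeft_apply]
    exact Submodule.sum_mem _ fun i _ =>
      Ideal.mul_mem_left _ _ (Ideal.subset_span ⟨_, (f i).2, rfl⟩)

theorem finrank_span_image [FiniteDimensional K R]
    (hbij : Function.Bijective (sumMulLeft u Ω.toLinearMap)) (I : Ideal R) :
    Module.finrank K ((Ideal.span (Ω '' I)).restrictScalars K) =
      Fintype.card ι * Module.finrank K (I.restrictScalars K) := by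
  rw [span_image_eq_range_sumMulLeft hbij.2,
    LinearMap.finrank_range_of_inj (injective_sumMulLeft_comp_subtype hbij.1 _),
    Module.finrank_pi_fintype, Finset.sum_const, Finset.card_univ, smul_eq_mul]

end SumMulLeft

namespace QuaternionGroup

def cosetRep (n ℓ : ℕ) : Bool × Fin ℓ → QuaternionGroup n
  | (false, r) => a (r : ℕ)
  | (true, r) => xa (r : ℕ)

theorem a_natCast_pow {n : ℕ} (k q : ℕ) :
    (a (k : ZMod (2 * n))) ^ q = a ((k * q : ℕ) : ZMod (2 * n)) := by
  rw [← a_one_pow, ← pow_mul, a_one_pow]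

theorem exists_eq_cosetRep_mul {n ℓ : ℕ} [NeZero n] (hℓ : 0 < ℓ) (g : QuaternionGroup n) :
    ∃ i q, g = cosetRep n ℓ i * a (ℓ : ZMod (2 * n)) ^ q := by
  have hdiv (j : ZMod (2 * n)) :
      ((j.val % ℓ : ℕ) : ZMod (2 * n)) + ((ℓ * (j.val / ℓ) : ℕ)) = j := by
    rw [← Nat.cast_add, Nat.mod_add_div, ZMod.natCast_zmod_val]
  cases g with
  | a j => exact ⟨(false, ⟨j.val % ℓ, Nat.mod_lt _ hℓ⟩), j.val / ℓ, by
      rw [a_natCast_pow, cosetRep, a_mul_a, hdiv]⟩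
  | xa j => exact ⟨(true, ⟨j.val % ℓ, Nat.mod_lt _ hℓ⟩), j.val / ℓ, by
      rw [a_natCast_pow, cosetRep, xa_mul_a, hdiv]⟩

end QuaternionGroup

open QuaternionGroup in
theorem sumMulLeft_cosetRep_surjective {K R : Type*} [Field K] [Ring R] [Algebra K R]
    {n ℓ : ℕ} [NeZero n] (hℓ : 0 < ℓ) {Ω : R →ₐ[K] MonoidAlgebra K (QuaternionGroup n)} {x : R}
    (hx : Ω x = MonoidAlgebra.of K _ (a (ℓ : ZMod (2 * n)))) :
    Function.Surjective
      (sumMulLeft (fun i => MonoidAlgebra.of K _ (cosetRep n ℓ i)) Ω.toLinearMap) := by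
  classical
  rw [← LinearMap.range_eq_top, eq_top_iff]
  rintro y -
  induction y using MonoidAlgebra.induction_on with
  | of g =>
    obtain ⟨i, q, rfl⟩ := exists_eq_cosetRep_mul hℓ g
    exact ⟨Pi.single i (x ^ q), by simp [sumMulLeft_single, hx]⟩
  | add y z hy hz => exact add_mem hy hz
  | smul c y hy => exact Submodule.smul_mem _ c hy

theorem finrank_Rq (F : Type*) [Field F] (M : ℕ) : Module.finrank F (Rq F M) = M := by
  rw [finrank_quotient_span_eq_natDegree, ← C_1, natDegree_X_pow_sub_C]

set_option synthInstance.maxHeartbeats 400000 in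
theorem stmt_11_general {F : Type*} [Field F] {n ℓ M : ℕ} (hn : 1 ≤ n)
    (hℓdvd : ℓ ∣ 2 * n) (hM : M = 2 * n / ℓ)
    (h : F[X]) (hdvd : h ∣ X ^ M - 1)
    (Ω : Rq F M →ₐ[F] MonoidAlgebra F (QuaternionGroup n))
    (hΩ : Ω (mkq F M X) =
      MonoidAlgebra.of F (QuaternionGroup n) (QuaternionGroup.a (ℓ : ZMod (2 * n))))
    (Chat : Ideal (Rq F M)) (hChat : Chat = Ideal.span {mkq F M h})
    (C : Ideal (MonoidAlgebra F (QuaternionGroup n)))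
    (hC : C = Ideal.span (⇑Ω '' (Chat : Set (Rq F M)))) :
    Module.finrank F (C.restrictScalars F) = 2 * ℓ * (M - h.natDegree) ∧
    Module.finrank F (C.restrictScalars F) =
      2 * ℓ * Module.finrank F (Chat.restrictScalars F) := by
  have : NeZero n := ⟨by omega⟩
  have hℓ : 0 < ℓ := Nat.pos_of_dvd_of_pos hℓdvd (by omega)
  have hℓM : ℓ * M = 2 * n := by rw [hM, Nat.mul_div_cancel' hℓdvd]
  have hXM : (X ^ M - 1 : F[X]) ≠ 0 := by
    rw [← C_1]; exact X_pow_sub_C_ne_zero (Nat.pos_of_ne_zero (by rintro rfl; omega)) 1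
  have : FiniteDimensional F (Rq F M) := (AdjoinRoot.powerBasis hXM).finite
  have hsurj := sumMulLeft_cosetRep_surjective hℓ hΩ
  have hdim : Module.finrank F (Bool × Fin ℓ → Rq F M) =
      Module.finrank F (MonoidAlgebra F (QuaternionGroup n)) := by
    rw [Module.finrank_pi_fintype, Module.finrank_eq_card_basis (MonoidAlgebra.basis _ F),
      QuaternionGroup.card]
    simp only [finrank_Rq, Finset.sum_const, Finset.card_univ, Fintype.card_prod,
      Fintype.card_bool, Fintype.card_fin, smul_eq_mul, mul_assoc, hℓM]
    ring
  have hbij : Function.Bijective _ :=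
    ⟨(LinearMap.injective_iff_surjective_of_finrank_eq_finrank hdim).2 hsurj, hsurj⟩
  have hChat_dim : Module.finrank F (Chat.restrictScalars F) = M - h.natDegree := by
    rw [hChat, finrank_span_mk_of_dvd hXM hdvd, ← C_1, natDegree_X_pow_sub_C]
  have hC_dim : Module.finrank F (C.restrictScalars F) =
      2 * ℓ * Module.finrank F (Chat.restrictScalars F) := by
    rw [hC, finrank_span_image hbij, Fintype.card_prod, Fintype.card_bool, Fintype.card_fin]
  exact ⟨hC_dim.trans (by rw [hChat_dim]), hC_dim⟩

set_option synthInstance.maxHeartbeats 400000 in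
theorem stmt_11 {F : Type*} [Field F] {n ℓ M : ℕ} (hn : 1 ≤ n)
    (hchar : ((4 * n : ℕ) : F) ≠ 0)
    (hℓpos : 0 < ℓ) (hℓdvd : ℓ ∣ 2 * n) (hM : M = 2 * n / ℓ)
    (h : F[X]) (hmonic : h.Monic) (hdvd : h ∣ X ^ M - 1)
    (Ω : Rq F M →ₐ[F] MonoidAlgebra F (QuaternionGroup n))
    (hΩ : Ω (mkq F M X) =
      MonoidAlgebra.of F (QuaternionGroup n) (QuaternionGroup.a (ℓ : ZMod (2 * n))))
    (Chat : Ideal (Rq F M)) (hChat : Chat = Ideal.span {mkq F M h})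
    (C : Ideal (MonoidAlgebra F (QuaternionGroup n)))
    (hC : C = Ideal.span (⇑Ω '' (Chat : Set (Rq F M)))) :
    Module.finrank F (C.restrictScalars F) = 2 * ℓ * (M - h.natDegree) ∧
    Module.finrank F (C.restrictScalars F) =
      2 * ℓ * Module.finrank F (Chat.restrictScalars F) :=
  stmt_11_general hn hℓdvd hM h hdvd Ω hΩ Chat hChat C hC
end

section
/- Assume n is even and let e₂ = (2n)^{−1}·∑_{i=0}^{2n−1} (−1)^i x^i ∈ F[Q_{4n}]. Then e₂ is a central idempotent of F[Q_{4n}], the two-sided ideal F[Q_{4n}]·e₂ has F-dimension 2, and every left ideal of F[Q_{4n}] contained in F[Q_{4n}]·e₂ is one of the following four: 0, the one-dimensional span F·(e₂ + y·e₂), the one-dimensional span F·(e₂ − y·e₂), or F[Q_{4n}]·e₂ itself. -/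
/-!
For even `n`, `Q_{4n}` has the two linear characters `χ±` with `x ↦ -1`, `y ↦ ±1`,
and `e₂ = e₊ + e₋` is the sum of their character idempotents `e_χ = |G|⁻¹ ∑ χ(g⁻¹) g`.
Since `g e_χ = χ(g) e_χ = e_χ g`, each `e_χ` is a central idempotent spanning the line
`F[G] e_χ = F e_χ`, and idempotents of distinct characters are orthogonal. Hence
`F[Q_{4n}] e₂ = F e₊ ⊕ F e₋`, with `e₂ ± y e₂ = 2 e±`. A left ideal `C` inside it contains
`e± c` for every `c ∈ C`, and `c = e₊ c + e₋ c`; so `C` is the sum of its intersections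
with the two lines, each of which is `0` or the whole line.
-/

open MonoidAlgebra

namespace MonoidAlgebra

variable {F G : Type*} [Field F] [Group G] [Fintype G]

noncomputable def charIdempotent (χ : G →* F) : MonoidAlgebra F G :=
  (Fintype.card G : F)⁻¹ • ∑ g, χ g⁻¹ • of F G g

variable (χ ψ : G →* F)

theorem of_mul_charIdempotent (g : G) :
    of F G g * charIdempotent χ = χ g • charIdempotent χ := by
  have hsum : of F G g * ∑ h, χ h⁻¹ • of F G h = χ g • ∑ h, χ h⁻¹ • of F G h := by
    rw [Finset.mul_sum, Finset.smul_sum]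
    refine Fintype.sum_equiv (Equiv.mulLeft g) _ _ fun h => ?_
    rw [Equiv.coe_mulLeft, mul_smul_comm, map_mul, smul_smul, mul_inv_rev, map_mul χ,
      mul_left_comm, ← map_mul χ, mul_inv_cancel, map_one, mul_one]
  rw [charIdempotent, mul_smul_comm, hsum, smul_comm]

theorem charIdempotent_mul_of (g : G) :
    charIdempotent χ * of F G g = χ g • charIdempotent χ := by
  have hsum : (∑ h, χ h⁻¹ • of F G h) * of F G g = χ g • ∑ h, χ h⁻¹ • of F G h := by
    rw [Finset.sum_mul, Finset.smul_sum]
    refine Fintype.sum_equiv (Equiv.mulRight g) _ _ fun h => ?_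
    rw [Equiv.coe_mulRight, smul_mul_assoc, map_mul, smul_smul, mul_inv_rev, map_mul χ,
      ← mul_assoc, ← map_mul χ, mul_inv_cancel, map_one, one_mul]
  rw [charIdempotent, smul_mul_assoc, hsum, smul_comm]

theorem mul_charIdempotent (a : MonoidAlgebra F G) :
    a * charIdempotent χ = lift F F G χ a • charIdempotent χ := by
  induction a using MonoidAlgebra.induction_on with
  | of g => rw [of_mul_charIdempotent, lift_of]
  | add a b ha hb => rw [add_mul, ha, hb, map_add, add_smul]
  | smul r a ha => rw [smul_mul_assoc, ha, map_smul, smul_assoc]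

theorem charIdempotent_mul (a : MonoidAlgebra F G) :
    charIdempotent χ * a = lift F F G χ a • charIdempotent χ := by
  induction a using MonoidAlgebra.induction_on with
  | of g => rw [charIdempotent_mul_of, lift_of]
  | add a b ha hb => rw [mul_add, ha, hb, map_add, add_smul]
  | smul r a ha => rw [mul_smul_comm, ha, map_smul, smul_assoc]

theorem commute_charIdempotent (a : MonoidAlgebra F G) : Commute (charIdempotent χ) a := by
  rw [Commute, SemiconjBy, mul_charIdempotent, charIdempotent_mul]

theorem lift_charIdempotent (hG : (Fintype.card G : F) ≠ 0) :
    lift F F G χ (charIdempotent χ) = 1 := by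
  simp only [charIdempotent, map_smul, map_sum, lift_of, smul_eq_mul, ← map_mul χ,
    inv_mul_cancel, map_one, mul_one, Finset.sum_const, Finset.card_univ, nsmul_eq_mul]
  exact inv_mul_cancel₀ hG

theorem isIdempotentElem_charIdempotent (hG : (Fintype.card G : F) ≠ 0) :
    IsIdempotentElem (charIdempotent χ) := by
  rw [IsIdempotentElem, mul_charIdempotent, lift_charIdempotent χ hG, one_smul]

theorem charIdempotent_ne_zero (hG : (Fintype.card G : F) ≠ 0) : charIdempotent χ ≠ 0 := by
  intro h
  simpa [h] using lift_charIdempotent χ hG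

theorem charIdempotent_mul_charIdempotent_of_ne (h : χ ≠ ψ) :
    charIdempotent χ * charIdempotent ψ = 0 := by
  obtain ⟨g, hg⟩ := DFunLike.ne_iff.1 h
  have : (χ g - ψ g) • (charIdempotent χ * charIdempotent ψ) = 0 := by
    rw [sub_smul, ← smul_mul_assoc, ← charIdempotent_mul_of, ← mul_smul_comm,
      ← of_mul_charIdempotent, mul_assoc, sub_self]
  exact (smul_eq_zero.1 this).resolve_left (sub_ne_zero.2 hg)

theorem lift_eq_zero_of_charIdempotent_notMem {C : Ideal (MonoidAlgebra F G)}
    (hχ : charIdempotent χ ∉ C) {c : MonoidAlgebra F G} (hc : c ∈ C) :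
    lift F F G χ c = 0 := by
  by_contra h
  have : lift F F G χ c • charIdempotent χ ∈ C.restrictScalars F := by
    rw [← charIdempotent_mul]
    exact C.mul_mem_left _ hc
  exact hχ ((Submodule.smul_mem_iff _ h).1 this)

variable {χ ψ}

theorem isIdempotentElem_charIdempotent_add (hG : (Fintype.card G : F) ≠ 0) (h : χ ≠ ψ) :
    IsIdempotentElem (charIdempotent χ + charIdempotent ψ) :=
  (isIdempotentElem_charIdempotent χ hG).add (isIdempotentElem_charIdempotent ψ hG) <| by
    rw [charIdempotent_mul_charIdempotent_of_ne χ ψ h,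
      charIdempotent_mul_charIdempotent_of_ne ψ χ h.symm, add_zero]

theorem eq_lift_smul_add_lift_smul_of_mem_span (hG : (Fintype.card G : F) ≠ 0) (h : χ ≠ ψ)
    {c : MonoidAlgebra F G} (hc : c ∈ Ideal.span {charIdempotent χ + charIdempotent ψ}) :
    c = lift F F G χ c • charIdempotent χ + lift F F G ψ c • charIdempotent ψ := by
  obtain ⟨a, rfl⟩ := Ideal.mem_span_singleton'.1 hc
  rw [← mul_charIdempotent, ← mul_charIdempotent, ← mul_add, mul_assoc,
    (isIdempotentElem_charIdempotent_add hG h).eq]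

theorem restrictScalars_span_charIdempotent_add (hG : (Fintype.card G : F) ≠ 0) (h : χ ≠ ψ) :
    (Ideal.span {charIdempotent χ + charIdempotent ψ}).restrictScalars F =
      Submodule.span F {charIdempotent χ, charIdempotent ψ} := by
  refine le_antisymm (fun c hc => ?_) ?_
  · exact Submodule.mem_span_pair.2
      ⟨_, _, (eq_lift_smul_add_lift_smul_of_mem_span hG h hc).symm⟩
  · have hmem (a : MonoidAlgebra F G) :=
      Ideal.mul_mem_left _ a (Ideal.mem_span_singleton_self (charIdempotent χ + charIdempotent ψ))
    rw [Submodule.span_le, Set.insert_subset_iff, Set.singleton_subset_iff]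
    constructor
    · simpa [mul_add, (isIdempotentElem_charIdempotent χ hG).eq,
        charIdempotent_mul_charIdempotent_of_ne χ ψ h] using hmem (charIdempotent χ)
    · simpa [mul_add, (isIdempotentElem_charIdempotent ψ hG).eq,
        charIdempotent_mul_charIdempotent_of_ne ψ χ h.symm] using hmem (charIdempotent ψ)

theorem linearIndependent_charIdempotent_pair (hG : (Fintype.card G : F) ≠ 0) (h : χ ≠ ψ) :
    LinearIndependent F ![charIdempotent χ, charIdempotent ψ] := by
  refine LinearIndependent.pair_iff.2 fun s t hst => ⟨?_, ?_⟩
  · have := congrArg (charIdempotent χ * ·) hst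
    simpa [mul_add, (isIdempotentElem_charIdempotent χ hG).eq,
      charIdempotent_mul_charIdempotent_of_ne χ ψ h, charIdempotent_ne_zero χ hG] using this
  · have := congrArg (charIdempotent ψ * ·) hst
    simpa [mul_add, (isIdempotentElem_charIdempotent ψ hG).eq,
      charIdempotent_mul_charIdempotent_of_ne ψ χ h.symm, charIdempotent_ne_zero ψ hG] using this

theorem finrank_span_charIdempotent_add (hG : (Fintype.card G : F) ≠ 0) (h : χ ≠ ψ) :
    Module.finrank F
      ((Ideal.span {charIdempotent χ + charIdempotent ψ}).restrictScalars F) = 2 := by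
  rw [restrictScalars_span_charIdempotent_add hG h, ← Matrix.range_cons_cons_empty,
    finrank_span_eq_card (linearIndependent_charIdempotent_pair hG h), Fintype.card_fin]

theorem ideal_eq_of_le_span_charIdempotent_add (hG : (Fintype.card G : F) ≠ 0) (h : χ ≠ ψ)
    {C : Ideal (MonoidAlgebra F G)}
    (hC : C ≤ Ideal.span {charIdempotent χ + charIdempotent ψ}) :
    C = ⊥ ∨ C.restrictScalars F = Submodule.span F {charIdempotent χ} ∨
      C.restrictScalars F = Submodule.span F {charIdempotent ψ} ∨
      C = Ideal.span {charIdempotent χ + charIdempotent ψ} := by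
  have hdecomp {c} (hc : c ∈ C) := eq_lift_smul_add_lift_smul_of_mem_span hG h (hC hc)
  by_cases hχ : charIdempotent χ ∈ C <;> by_cases hψ : charIdempotent ψ ∈ C
  · exact .inr <| .inr <| .inr <| le_antisymm hC <|
      (Ideal.span_singleton_le_iff_mem _).2 (C.add_mem hχ hψ)
  · refine .inr <| .inl <|
      le_antisymm (fun c hc => ?_) ((Submodule.span_singleton_le_iff_mem _ _).2 hχ)
    rw [hdecomp hc, lift_eq_zero_of_charIdempotent_notMem ψ hψ hc, zero_smul, add_zero]
    exact Submodule.smul_mem _ _ (Submodule.mem_span_singleton_self _)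
  · refine .inr <| .inr <| .inl <|
      le_antisymm (fun c hc => ?_) ((Submodule.span_singleton_le_iff_mem _ _).2 hψ)
    rw [hdecomp hc, lift_eq_zero_of_charIdempotent_notMem χ hχ hc, zero_smul, zero_add]
    exact Submodule.smul_mem _ _ (Submodule.mem_span_singleton_self _)
  · refine .inl <| (Submodule.eq_bot_iff _).2 fun c hc => ?_
    rw [hdecomp hc, lift_eq_zero_of_charIdempotent_notMem χ hχ hc,
      lift_eq_zero_of_charIdempotent_notMem ψ hψ hc, zero_smul, zero_smul, add_zero]

end MonoidAlgebra

namespace QuaternionGroup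

variable {F : Type*} [Field F] {n : ℕ}

theorem a_inv (k : ZMod (2 * n)) : (a k)⁻¹ = a (-k) :=
  inv_eq_of_mul_eq_one_right (by rw [a_mul_a, add_neg_cancel, a_zero])

theorem xa_inv (k : ZMod (2 * n)) : (xa k)⁻¹ = xa ((n : ZMod (2 * n)) + k) :=
  inv_eq_of_mul_eq_one_right <| by
    rw [xa_mul_xa, ← add_assoc, add_sub_cancel_right, ← Nat.cast_add, ← two_mul,
      ZMod.natCast_self, a_zero]

variable [NeZero n]

variable (F n) in
noncomputable def signAddChar : AddChar (ZMod (2 * n)) F :=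
  AddChar.zmodChar (2 * n) (by rw [pow_mul, neg_one_sq, one_pow])

theorem signAddChar_natCast (i : ℕ) : signAddChar F n i = (-1) ^ i :=
  AddChar.zmodChar_apply' _ i

theorem signAddChar_mul_self (k : ZMod (2 * n)) :
    signAddChar F n k * signAddChar F n k = 1 := by
  rw [signAddChar, AddChar.zmodChar_apply, ← mul_pow, neg_one_mul, neg_neg, one_pow]

theorem signAddChar_neg (k : ZMod (2 * n)) : signAddChar F n (-k) = signAddChar F n k := by
  rw [AddChar.map_neg_eq_inv, inv_eq_of_mul_eq_one_left (signAddChar_mul_self k)]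

noncomputable def signChar (ε : F) (hε : ε ^ 2 = (-1) ^ n) : QuaternionGroup n →* F where
  toFun
    | a k => signAddChar F n k
    | xa k => ε * signAddChar F n k
  map_one' := by rw [one_def]; exact AddChar.map_zero_eq_one _
  map_mul' := by
    rintro (i | i) (j | j)
    · simp only [a_mul_a, AddChar.map_add_eq_mul]
    · simp only [a_mul_xa, sub_eq_add_neg, AddChar.map_add_eq_mul, signAddChar_neg]
      ring
    · simp only [xa_mul_a, AddChar.map_add_eq_mul]
      ring
    · simp only [xa_mul_xa, sub_eq_add_neg, AddChar.map_add_eq_mul, signAddChar_neg,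
        signAddChar_natCast, ← hε]
      ring

variable {ε : F} (hε : ε ^ 2 = (-1) ^ n)

@[simp]
theorem signChar_a (k : ZMod (2 * n)) : signChar ε hε (a k) = signAddChar F n k := rfl

@[simp]
theorem signChar_xa (k : ZMod (2 * n)) : signChar ε hε (xa k) = ε * signAddChar F n k := rfl

theorem signChar_ne_signChar_neg (h2 : (2 : F) ≠ 0) :
    signChar ε hε ≠ signChar (-ε) (by rw [neg_sq, hε]) := fun h => by
  have hε0 : ε ≠ 0 := by
    rintro rfl
    exact pow_ne_zero n (neg_ne_zero.2 one_ne_zero) (by rw [← hε, zero_pow two_ne_zero])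
  have h1 := DFunLike.congr_fun h (xa 0)
  rw [signChar_xa, signChar_xa, AddChar.map_zero_eq_one, mul_one, mul_one, eq_neg_iff_add_eq_zero,
    ← two_mul] at h1
  exact mul_ne_zero h2 hε0 h1

theorem of_xa_zero_mul_charIdempotent_signChar :
    of F (QuaternionGroup n) (xa 0) * charIdempotent (signChar ε hε) =
      ε • charIdempotent (signChar ε hε) := by
  rw [of_mul_charIdempotent, signChar_xa, AddChar.map_zero_eq_one, mul_one]

theorem sum_range_neg_one_pow_smul_of_a_one_pow :
    ∑ i ∈ Finset.range (2 * n), (-1 : F) ^ i • of F (QuaternionGroup n) (a 1) ^ i =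
      ∑ k : ZMod (2 * n), signAddChar F n k • of F (QuaternionGroup n) (a k) := by
  refine Finset.sum_nbij' (fun i => (i : ZMod (2 * n))) (fun k => k.val) (by simp)
    (fun k _ => Finset.mem_range.2 k.val_lt)
    (fun i hi => ZMod.val_cast_of_lt (Finset.mem_range.1 hi))
    (fun k _ => ZMod.natCast_zmod_val k) fun i _ => ?_
  rw [← map_pow, a_one_pow, signAddChar_natCast]

theorem charIdempotent_signChar_add_charIdempotent_signChar_neg :
    charIdempotent (signChar ε hε) + charIdempotent (signChar (-ε) (by rw [neg_sq, hε])) =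
      ((2 * n : ℕ) : F)⁻¹ •
        ∑ k : ZMod (2 * n), signAddChar F n k • of F (QuaternionGroup n) (a k) := by
  have hsum :
      ∑ g, (signChar ε hε g⁻¹ + signChar (-ε) (by rw [neg_sq, hε]) g⁻¹) • of F _ g =
      (2 : F) • ∑ k : ZMod (2 * n), signAddChar F n k • of F (QuaternionGroup n) (a k) := by
    rw [Finset.smul_sum]
    refine (Fintype.sum_of_injective a (fun _ _ => a.inj) _ _ ?_ fun k => ?_).symm
    · rintro (k | k) hk
      · exact absurd ⟨k, rfl⟩ hk
      · rw [xa_inv, signChar_xa, signChar_xa, neg_mul, add_neg_cancel, zero_smul]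
    · rw [a_inv, signChar_a, signChar_a, signAddChar_neg, smul_smul, two_mul]
  rw [charIdempotent, charIdempotent, ← smul_add, ← Finset.sum_add_distrib]
  simp only [← add_smul]
  rw [hsum, smul_smul, card]
  congr 1
  rcases eq_or_ne (2 : F) 0 with h2 | h2
  -- in characteristic 2 both sides vanish, as `(0 : F)⁻¹ = 0`
  · simp [h2]
  · rw [show 4 * n = 2 * (2 * n) by ring, Nat.cast_mul, Nat.cast_two, mul_inv, mul_right_comm,
      inv_mul_cancel₀ h2, one_mul]

end QuaternionGroup

open QuaternionGroup in
set_option synthInstance.maxHeartbeats 400000 in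
theorem stmt_13 {F : Type*} [Field F] {n : ℕ} (hn : 1 ≤ n) (hne : Even n)
    (hchar : ((4 * n : ℕ) : F) ≠ 0)
    (x y e₂ : MonoidAlgebra F (QuaternionGroup n))
    (hx : x = MonoidAlgebra.of F (QuaternionGroup n) (QuaternionGroup.a 1))
    (hy : y = MonoidAlgebra.of F (QuaternionGroup n) (QuaternionGroup.xa 0))
    (he₂ : e₂ = ((2 * n : ℕ) : F)⁻¹ •
      ∑ i ∈ Finset.range (2 * n), ((-1 : F) ^ i) • x ^ i) :
    e₂ * e₂ = e₂ ∧ (∀ z, e₂ * z = z * e₂) ∧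
    Module.finrank F ((Ideal.span {e₂}).restrictScalars F) = 2 ∧
    Module.finrank F (Submodule.span F {e₂ + y * e₂}) = 1 ∧
    Module.finrank F (Submodule.span F {e₂ - y * e₂}) = 1 ∧
    ∀ C : Ideal (MonoidAlgebra F (QuaternionGroup n)), C ≤ Ideal.span {e₂} →
      C = ⊥ ∨
      C.restrictScalars F = Submodule.span F {e₂ + y * e₂} ∨
      C.restrictScalars F = Submodule.span F {e₂ - y * e₂} ∨
      C = Ideal.span {e₂} := by
  have : NeZero n := ⟨by omega⟩
  have h2 : (2 : F) ≠ 0 := fun h => hchar <| by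
    rw [show 4 * n = 2 * (2 * n) by ring, Nat.cast_mul, Nat.cast_two, h, zero_mul]
  have hG : (Fintype.card (QuaternionGroup n) : F) ≠ 0 := by rwa [card]
  have hε : (1 : F) ^ 2 = (-1) ^ n := by rw [one_pow, hne.neg_one_pow]
  set χ := signChar (1 : F) hε
  set χ' := signChar (n := n) (-1 : F) (by rw [neg_sq, hε])
  have hχ : χ ≠ χ' := signChar_ne_signChar_neg hε h2
  have he : e₂ = charIdempotent χ + charIdempotent χ' := by
    rw [he₂, hx, sum_range_neg_one_pow_smul_of_a_one_pow,
      charIdempotent_signChar_add_charIdempotent_signChar_neg]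
  have hye : y * e₂ = charIdempotent χ - charIdempotent χ' := by
    rw [he, hy, mul_add, of_xa_zero_mul_charIdempotent_signChar,
      of_xa_zero_mul_charIdempotent_signChar, one_smul, neg_one_smul, sub_eq_add_neg]
  have hplus : e₂ + y * e₂ = (2 : F) • charIdempotent χ := by rw [hye, he]; module
  have hminus : e₂ - y * e₂ = (2 : F) • charIdempotent χ' := by rw [hye, he]; module
  rw [hplus, hminus, Submodule.span_singleton_smul_eq (IsUnit.mk0 _ h2),
    Submodule.span_singleton_smul_eq (IsUnit.mk0 _ h2), he]
  exact ⟨(isIdempotentElem_charIdempotent_add hG hχ).eq,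
    fun z => ((commute_charIdempotent χ z).add_left (commute_charIdempotent χ' z)).eq,
    finrank_span_charIdempotent_add hG hχ, finrank_span_singleton (charIdempotent_ne_zero χ hG),
    finrank_span_singleton (charIdempotent_ne_zero χ' hG),
    fun C hC => ideal_eq_of_le_span_charIdempotent_add hG hχ hC⟩
end

section
/- Assume n is odd and that there exists u ∈ F with u² = −1, and let e' = (2n)^{−1}·∑_{i=0}^{2n−1} (−1)^i x^i ∈ F[Q_{4n}]. Then e' is a central idempotent of F[Q_{4n}], the elements (e' + u·y·e')/2 and (e' − u·y·e')/2 are idempotents, and every left ideal of F[Q_{4n}] contained in F[Q_{4n}]·e' is one of the following four: 0, the one-dimensional span F·(e' + u·y·e'), the one-dimensional span F·(e' − u·y·e'), or F[Q_{4n}]·e' itself. -/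
/-!
With `z = -x`, `e'` is `(2n)⁻¹` times the geometric sum `∑_{i<2n} zⁱ`, and `z^{2n} = 1` makes
this sum absorb `z`; so `e'` is idempotent and `x e' = -e'`. Conjugation by `y` turns `z` into
`z⁻¹`, whose geometric sum is the same sum read backwards, so `e'` commutes with both generators
of `F[Q_{4n}]` and is central. Since `n` is odd, `y² e' = xⁿ e' = -e'`, so
`ε± = (e' ± u y e') / 2` are idempotents with `ε₊ + ε₋ = e'`, and right multiplication by `x`
and `y` (hence by every element) acts on each `ε±` by a scalar. A left ideal `C ⊆ F[Q_{4n}] e'`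
satisfies `c = ε₊ c + ε₋ c`, and each `ε± C ⊆ C ∩ F ε±` is either `0` or all of `F ε±`.
-/

open Finset MonoidAlgebra

section GeomSum

theorem pow_mul_eq_self_of_mul_eq_self {M : Type*} [Monoid M] {a b : M} (h : a * b = b)
    (k : ℕ) : a ^ k * b = b := by
  induction k with
  | zero => rw [pow_zero, one_mul]
  | succ k ih => rw [pow_succ, mul_assoc, h, ih]

variable {A : Type*} [Ring A] {z : A} {N : ℕ}

theorem mul_geom_sum_eq_self (hz : z ^ N = 1) :
    z * ∑ i ∈ range N, z ^ i = ∑ i ∈ range N, z ^ i := by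
  have h := mul_geom_sum z N
  rwa [hz, sub_self, sub_mul, one_mul, sub_eq_zero] at h

theorem geom_sum_mul_eq_nsmul {W : A} (hW : z * W = W) :
    (∑ i ∈ range N, z ^ i) * W = N • W := by
  simp only [sum_mul, pow_mul_eq_self_of_mul_eq_self hW, sum_const, card_range]

theorem geom_sum_eq_of_mul_eq_one {z' : A} (hz : z ^ N = 1) (h₁ : z' * z = 1)
    (h₂ : z * z' = 1) : ∑ i ∈ range N, z' ^ i = ∑ i ∈ range N, z ^ i := by
  have hpow : ∀ j < N, z' ^ (N - 1 - j) = z ^ (j + 1) := fun j hj => by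
    calc z' ^ (N - 1 - j) = z' ^ (N - 1 - j) * z ^ N := by rw [hz, mul_one]
      _ = (z' * z) ^ (N - 1 - j) * z ^ (j + 1) := by
        rw [(show Commute z' z from h₁.trans h₂.symm).mul_pow, mul_assoc, ← pow_add,
          show N - 1 - j + (j + 1) = N by omega]
      _ = z ^ (j + 1) := by rw [h₁, one_pow, one_mul]
  calc ∑ i ∈ range N, z' ^ i = ∑ j ∈ range N, z' ^ (N - 1 - j) :=
        (sum_range_reflect _ N).symm
    _ = z * ∑ j ∈ range N, z ^ j := by
      rw [mul_sum]
      exact sum_congr rfl fun j hj => by rw [hpow j (mem_range.1 hj), pow_succ']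
    _ = ∑ j ∈ range N, z ^ j := mul_geom_sum_eq_self hz

theorem commute_geom_sum_of_semiconjBy {y z' : A} (hz : z ^ N = 1) (h₁ : z' * z = 1)
    (h₂ : z * z' = 1) (hy : SemiconjBy y z z') : Commute y (∑ i ∈ range N, z ^ i) := by
  calc y * ∑ i ∈ range N, z ^ i = (∑ i ∈ range N, z' ^ i) * y := by
        rw [mul_sum, sum_mul]
        exact sum_congr rfl fun i _ => hy.pow_right i
    _ = (∑ i ∈ range N, z ^ i) * y := by rw [geom_sum_eq_of_mul_eq_one hz h₁ h₂]

theorem isIdempotentElem_inv_smul_geom_sum (K : Type*) [Field K] [Algebra K A] (hz : z ^ N = 1)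
    (hN : (N : K) ≠ 0) : IsIdempotentElem ((N : K)⁻¹ • ∑ i ∈ range N, z ^ i) := by
  rw [IsIdempotentElem, smul_mul_smul_comm, geom_sum_mul_eq_nsmul (mul_geom_sum_eq_self hz),
    ← Nat.cast_smul_eq_nsmul K, smul_smul, mul_assoc, inv_mul_cancel₀ hN, mul_one]

end GeomSum

section SplitIdempotent

variable {K A : Type*} [Field K] [Ring A] [Algebra K A]

def splitIdempotent (e y : A) (u : K) : A := (2 : K)⁻¹ • (e + u • (y * e))

variable {e y : A} {u : K}

theorem splitIdempotent_mul_eq_smul {x : A} {c : K} (hx : e * x = c • e) :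
    splitIdempotent e y u * x = c • splitIdempotent e y u := by
  simp only [splitIdempotent, smul_mul_assoc, add_mul, mul_assoc, hx, mul_smul_comm, smul_add,
    smul_comm c]

theorem splitIdempotent_mul_eq_neg_smul (hey : Commute e y) (hyy : y * y * e = -e)
    (hu : u ^ 2 = -1) : splitIdempotent e y u * y = -u • splitIdempotent e y u := by
  simp only [splitIdempotent, smul_mul_assoc, add_mul, mul_assoc, hey.eq, ← mul_assoc y y e, hyy]
  rw [smul_neg]
  match_scalars
  · linear_combination (2⁻¹ : K) * hu
  · ring

theorem isIdempotentElem_splitIdempotent (h2 : (2 : K) ≠ 0) (he : IsIdempotentElem e)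
    (hey : Commute e y) (hyy : y * y * e = -e) (hu : u ^ 2 = -1) :
    IsIdempotentElem (splitIdempotent e y u) := by
  have hε : splitIdempotent e y u * e = splitIdempotent e y u := by
    rw [splitIdempotent_mul_eq_smul (c := (1 : K)) (by rw [he.eq, one_smul]), one_smul]
  calc splitIdempotent e y u * splitIdempotent e y u
      = (2 : K)⁻¹ • (splitIdempotent e y u * e + u • (splitIdempotent e y u * y * e)) := by
        rw [splitIdempotent, mul_smul_comm, mul_add, mul_smul_comm, mul_assoc]
    _ = splitIdempotent e y u := by
      rw [splitIdempotent_mul_eq_neg_smul hey hyy hu, smul_mul_assoc, hε, smul_smul,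
        show u * -u = 1 by linear_combination -hu, one_smul, ← two_smul K, smul_smul,
        inv_mul_cancel₀ h2, one_smul]

theorem splitIdempotent_add_splitIdempotent_neg (h2 : (2 : K) ≠ 0) :
    splitIdempotent e y u + splitIdempotent e y (-u) = e := by
  rw [splitIdempotent, splitIdempotent, ← smul_add, neg_smul, add_add_add_comm, add_neg_cancel,
    add_zero, ← two_smul K, smul_smul, inv_mul_cancel₀ h2, one_smul]

theorem span_splitIdempotent (h2 : (2 : K) ≠ 0) :
    K ∙ splitIdempotent e y u = K ∙ (e + u • (y * e)) :=
  Submodule.span_singleton_smul_eq (inv_ne_zero h2).isUnit _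

end SplitIdempotent

section Ideals

variable {K A : Type*} [Field K] [Ring A] [Algebra K A]

theorem exists_mul_eq_smul_of_mem_adjoin {ε : A} {s : Set A}
    (hs : ∀ x ∈ s, ∃ c : K, ε * x = c • ε) {r : A} (hr : r ∈ Algebra.adjoin K s) :
    ∃ c : K, ε * r = c • ε := by
  induction hr using Algebra.adjoin_induction with
  | mem x hx => exact hs x hx
  | algebraMap c => exact ⟨c, by rw [Algebra.algebraMap_eq_smul_one, mul_smul_comm, mul_one]⟩
  | add a b _ _ ha hb =>
    obtain ⟨c, hc⟩ := ha
    obtain ⟨d, hd⟩ := hb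
    exact ⟨c + d, by rw [mul_add, hc, hd, add_smul]⟩
  | mul a b _ _ ha hb =>
    obtain ⟨c, hc⟩ := ha
    obtain ⟨d, hd⟩ := hb
    exact ⟨c * d, by rw [← mul_assoc, hc, smul_mul_assoc, hd, smul_smul]⟩

theorem Submodule.mem_or_forall_mul_eq_zero (C : Submodule A A) {ε : A}
    (hε : ∀ r, ∃ c : K, ε * r = c • ε) : ε ∈ C ∨ ∀ r ∈ C, ε * r = 0 := by
  by_contra! h
  obtain ⟨hεC, r, hr, hεr⟩ := h
  obtain ⟨c, hc⟩ := hε r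
  have hc0 : c ≠ 0 := by rintro rfl; exact hεr (by rw [hc, zero_smul])
  have : ε = c⁻¹ • (ε * r) := by rw [hc, smul_smul, inv_mul_cancel₀ hc0, one_smul]
  exact hεC (this ▸ C.smul_of_tower_mem c⁻¹ (C.smul_mem ε hr))

theorem mul_eq_self_of_mem_span_singleton {e r : A} (he : IsIdempotentElem e)
    (hc : ∀ s, Commute e s) (hr : r ∈ Ideal.span {e}) : e * r = r := by
  obtain ⟨s, rfl⟩ := Ideal.mem_span_singleton'.1 hr
  rw [← mul_assoc, (hc s).eq, mul_assoc, he.eq]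

variable {ε₁ ε₂ : A}

theorem Submodule.restrictScalars_eq_span_singleton (C : Submodule A A)
    (hε₁ : ∀ r, ∃ c : K, ε₁ * r = c • ε₁) (hsum : ∀ r ∈ C, ε₁ * r + ε₂ * r = r)
    (h₁ : ε₁ ∈ C) (h₂ : ∀ r ∈ C, ε₂ * r = 0) : C.restrictScalars K = K ∙ ε₁ := by
  refine le_antisymm (fun r hr => ?_) ((Submodule.span_singleton_le_iff_mem _ _).2 h₁)
  obtain ⟨c, hc⟩ := hε₁ r
  refine Submodule.mem_span_singleton.2 ⟨c, ?_⟩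
  rw [← hc]
  simpa only [h₂ r hr, add_zero] using hsum r hr

theorem Submodule.eq_bot_or_restrictScalars_eq_span_singleton (C : Submodule A A)
    (hε₁ : ∀ r, ∃ c : K, ε₁ * r = c • ε₁) (hε₂ : ∀ r, ∃ c : K, ε₂ * r = c • ε₂)
    (hsum : ∀ r ∈ C, ε₁ * r + ε₂ * r = r) :
    C = ⊥ ∨ C.restrictScalars K = K ∙ ε₁ ∨ C.restrictScalars K = K ∙ ε₂ ∨
      (ε₁ ∈ C ∧ ε₂ ∈ C) := by
  rcases C.mem_or_forall_mul_eq_zero hε₁ with h₁ | h₁ <;>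
    rcases C.mem_or_forall_mul_eq_zero hε₂ with h₂ | h₂
  · exact Or.inr (Or.inr (Or.inr ⟨h₁, h₂⟩))
  · exact Or.inr (Or.inl (C.restrictScalars_eq_span_singleton hε₁ hsum h₁ h₂))
  · refine Or.inr (Or.inr (Or.inl (C.restrictScalars_eq_span_singleton hε₂ ?_ h₂ h₁)))
    exact fun r hr => by rw [add_comm, hsum r hr]
  · refine Or.inl ((Submodule.eq_bot_iff C).2 fun r hr => ?_)
    rw [← hsum r hr, h₁ r hr, h₂ r hr, add_zero]

end Ideals

namespace QuaternionGroup

section Generators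

variable (F : Type*) [CommSemiring F] (n : ℕ)

theorem of_a_eq_pow [NeZero n] (i : ZMod (2 * n)) :
    of F (QuaternionGroup n) (a i) = of F (QuaternionGroup n) (a 1) ^ i.val := by
  rw [← map_pow, a_one_pow, ZMod.natCast_zmod_val]

theorem of_xa_eq_mul (i : ZMod (2 * n)) :
    of F (QuaternionGroup n) (xa i) = of F _ (xa 0) * of F (QuaternionGroup n) (a i) := by
  rw [← map_mul, xa_mul_a, zero_add]

theorem adjoin_of_a_one_of_xa_zero [NeZero n] :
    Algebra.adjoin F {of F (QuaternionGroup n) (a 1), of F (QuaternionGroup n) (xa 0)} = ⊤ := by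
  refine eq_top_iff.2 fun r _ => MonoidAlgebra.induction_on r (fun g => ?_)
    (fun _ _ => add_mem) (fun c _ h => Subalgebra.smul_mem _ h c)
  have hx : of F (QuaternionGroup n) (a 1) ∈
      Algebra.adjoin F {of F (QuaternionGroup n) (a 1), of F (QuaternionGroup n) (xa 0)} :=
    Algebra.subset_adjoin (by simp)
  have hy : of F (QuaternionGroup n) (xa 0) ∈
      Algebra.adjoin F {of F (QuaternionGroup n) (a 1), of F (QuaternionGroup n) (xa 0)} :=
    Algebra.subset_adjoin (by simp)
  cases g with
  | a i => exact of_a_eq_pow F n i ▸ pow_mem hx _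
  | xa i =>
    rw [of_xa_eq_mul F n i, of_a_eq_pow F n i]
    exact mul_mem hy (pow_mem hx _)

theorem of_a_one_pow_two_mul : of F (QuaternionGroup n) (a 1) ^ (2 * n) = 1 := by
  rw [← map_pow, a_one_pow_n, map_one]

theorem of_xa_zero_mul_self :
    of F (QuaternionGroup n) (xa 0) * of F _ (xa 0) = of F (QuaternionGroup n) (a 1) ^ n := by
  rw [← map_mul, xa_mul_xa, ← map_pow, a_one_pow, add_sub_cancel_right]

theorem semiconjBy_of_xa_zero :
    SemiconjBy (of F (QuaternionGroup n) (xa 0)) (of F _ (a 1)) (of F _ (a (-1))) := by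
  rw [SemiconjBy, ← map_mul, ← map_mul, xa_mul_a, a_mul_xa, zero_add, zero_sub, neg_neg]

theorem of_a_neg_one_mul_of_a_one : of F (QuaternionGroup n) (a (-1)) * of F _ (a 1) = 1 := by
  rw [← map_mul, a_mul_a, neg_add_cancel, ← one_def, map_one]

theorem of_a_one_mul_of_a_neg_one : of F (QuaternionGroup n) (a 1) * of F _ (a (-1)) = 1 := by
  rw [← map_mul, a_mul_a, add_neg_cancel, ← one_def, map_one]

theorem coeff_of_a_one_pow_xa (k : ℕ) (j : ZMod (2 * n)) :
    (of F (QuaternionGroup n) (a 1) ^ k).coeff (xa j) = 0 := by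
  rw [← map_pow, a_one_pow, of_apply, coeff_single, Finsupp.single_eq_of_ne (by simp)]

theorem coeff_of_a_one_pow_one {k : ℕ} (hk0 : k ≠ 0) (hk : k < 2 * n) :
    (of F (QuaternionGroup n) (a 1) ^ k).coeff 1 = 0 := by
  rw [← map_pow, a_one_pow, of_apply, coeff_single, one_def, Finsupp.single_eq_of_ne]
  rw [ne_eq, a.injEq, eq_comm, ZMod.natCast_eq_zero_iff]
  exact fun hdvd => hk0 (Nat.eq_zero_of_dvd_of_lt hdvd hk)

end Generators

section SignIdempotent

variable {F : Type*} [Field F] {n : ℕ}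

variable (F n) in
noncomputable def signIdempotent : MonoidAlgebra F (QuaternionGroup n) :=
  ((2 * n : ℕ) : F)⁻¹ • ∑ i ∈ range (2 * n), ((-1 : F) ^ i) • of F (QuaternionGroup n) (a 1) ^ i

theorem signIdempotent_eq_geom_sum : signIdempotent F n =
    ((2 * n : ℕ) : F)⁻¹ • ∑ i ∈ range (2 * n), (-of F (QuaternionGroup n) (a 1)) ^ i := by
  simp only [signIdempotent, ← smul_pow, neg_one_smul]

theorem neg_of_a_one_pow_two_mul : (-of F (QuaternionGroup n) (a 1)) ^ (2 * n) = 1 := by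
  rw [(even_two_mul n).neg_pow, of_a_one_pow_two_mul]

theorem neZero_of_natCast_two_mul_ne_zero (hN : ((2 * n : ℕ) : F) ≠ 0) : NeZero n :=
  ⟨by rintro rfl; exact hN (by simp)⟩

theorem isIdempotentElem_signIdempotent (hN : ((2 * n : ℕ) : F) ≠ 0) :
    IsIdempotentElem (signIdempotent F n) := by
  rw [signIdempotent_eq_geom_sum]
  exact isIdempotentElem_inv_smul_geom_sum F neg_of_a_one_pow_two_mul hN

theorem of_a_one_mul_signIdempotent :
    of F (QuaternionGroup n) (a 1) * signIdempotent F n = -signIdempotent F n := by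
  have h := mul_geom_sum_eq_self (neg_of_a_one_pow_two_mul (F := F) (n := n))
  rw [neg_mul, neg_eq_iff_eq_neg] at h
  rw [signIdempotent_eq_geom_sum, mul_smul_comm, h, smul_neg]

theorem commute_signIdempotent (hN : ((2 * n : ℕ) : F) ≠ 0)
    (r : MonoidAlgebra F (QuaternionGroup n)) : Commute (signIdempotent F n) r := by
  have := neZero_of_natCast_two_mul_ne_zero hN
  refine Algebra.commute_of_mem_adjoin_of_forall_mem_commute
    (adjoin_of_a_one_of_xa_zero F n ▸ Algebra.mem_top) ?_
  rw [signIdempotent_eq_geom_sum]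
  rintro b (rfl | rfl)
  · exact (Commute.sum_left _ _ _ fun i _ => (Commute.refl _).neg_left.pow_left i).smul_left _
  · refine (commute_geom_sum_of_semiconjBy neg_of_a_one_pow_two_mul ?_ ?_
      (semiconjBy_of_xa_zero F n).neg_right).symm.smul_left _
    · rw [neg_mul_neg, of_a_neg_one_mul_of_a_one]
    · rw [neg_mul_neg, of_a_one_mul_of_a_neg_one]

theorem of_xa_zero_mul_self_mul_signIdempotent (hn : Odd n) :
    of F (QuaternionGroup n) (xa 0) * of F _ (xa 0) * signIdempotent F n =
      -signIdempotent F n := by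
  have h : -of F (QuaternionGroup n) (a 1) * signIdempotent F n = signIdempotent F n := by
    rw [neg_mul, of_a_one_mul_signIdempotent, neg_neg]
  rw [of_xa_zero_mul_self, ← neg_neg (of F _ (a 1) ^ n), ← hn.neg_pow, neg_mul,
    pow_mul_eq_self_of_mul_eq_self h]

theorem coeff_signIdempotent_one (hN : ((2 * n : ℕ) : F) ≠ 0) :
    (signIdempotent F n).coeff 1 = ((2 * n : ℕ) : F)⁻¹ := by
  have hpos : 0 < 2 * n := Nat.pos_of_ne_zero fun h => hN (by rw [h, Nat.cast_zero])
  rw [signIdempotent, coeff_smul_apply, coeff_sum, Finsupp.finsetSum_apply,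
    sum_eq_single_of_mem 0 (mem_range.2 hpos) fun i hi hi0 => ?_]
  · rw [coeff_smul_apply, pow_zero, pow_zero, one_smul, MonoidAlgebra.one_def, coeff_single,
      Finsupp.single_eq_same, smul_eq_mul, mul_one]
  · rw [coeff_smul_apply, coeff_of_a_one_pow_one F n hi0 (mem_range.1 hi), smul_zero]

theorem coeff_signIdempotent_xa (j : ZMod (2 * n)) :
    (signIdempotent F n).coeff (xa j) = 0 := by
  rw [signIdempotent, coeff_smul_apply, coeff_sum, Finsupp.finsetSum_apply,
    sum_eq_zero fun i _ => by rw [coeff_smul_apply, coeff_of_a_one_pow_xa, smul_zero], smul_zero]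

theorem coeff_of_xa_zero_mul_signIdempotent_one :
    (of F (QuaternionGroup n) (xa 0) * signIdempotent F n).coeff 1 = 0 := by
  rw [of_apply, coeff_single_mul_apply, one_mul, mul_one]
  exact coeff_signIdempotent_xa _

theorem signIdempotent_add_smul_ne_zero (hN : ((2 * n : ℕ) : F) ≠ 0) (v : F) :
    signIdempotent F n + v • (of F (QuaternionGroup n) (xa 0) * signIdempotent F n) ≠ 0 := by
  intro h
  have h1 := congrArg (fun r => r.coeff 1) h
  simp only [coeff_add, coeff_smul, Finsupp.add_apply, Finsupp.smul_apply,
    coeff_signIdempotent_one hN, coeff_of_xa_zero_mul_signIdempotent_one, smul_zero, add_zero,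
    coeff_zero, Finsupp.zero_apply] at h1
  exact inv_ne_zero hN h1

theorem exists_splitIdempotent_mul_eq_smul (hN : ((2 * n : ℕ) : F) ≠ 0) (hn : Odd n) {u : F}
    (hu : u ^ 2 = -1) (r : MonoidAlgebra F (QuaternionGroup n)) :
    ∃ c : F, splitIdempotent (signIdempotent F n) (of F _ (xa 0)) u * r =
      c • splitIdempotent (signIdempotent F n) (of F _ (xa 0)) u := by
  have := neZero_of_natCast_two_mul_ne_zero hN
  refine exists_mul_eq_smul_of_mem_adjoin ?_ (adjoin_of_a_one_of_xa_zero F n ▸ Algebra.mem_top)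
  rintro b (rfl | rfl)
  · exact ⟨-1, splitIdempotent_mul_eq_smul (by rw [(commute_signIdempotent hN _).eq,
      of_a_one_mul_signIdempotent, neg_one_smul])⟩
  · exact ⟨-u, splitIdempotent_mul_eq_neg_smul (commute_signIdempotent hN _)
      (of_xa_zero_mul_self_mul_signIdempotent hn) hu⟩

end SignIdempotent

end QuaternionGroup

open QuaternionGroup

set_option synthInstance.maxHeartbeats 400000 in
theorem stmt_14_general {F : Type*} [Field F] {n : ℕ} (hno : Odd n)
    (hchar : ((4 * n : ℕ) : F) ≠ 0)
    (u : F) (hu : u ^ 2 = -1)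
    (x y e' : MonoidAlgebra F (QuaternionGroup n))
    (hx : x = MonoidAlgebra.of F (QuaternionGroup n) (QuaternionGroup.a 1))
    (hy : y = MonoidAlgebra.of F (QuaternionGroup n) (QuaternionGroup.xa 0))
    (he' : e' = ((2 * n : ℕ) : F)⁻¹ •
      ∑ i ∈ Finset.range (2 * n), ((-1 : F) ^ i) • x ^ i) :
    e' * e' = e' ∧ (∀ z, e' * z = z * e') ∧
    ((2 : F)⁻¹ • (e' + u • (y * e'))) * ((2 : F)⁻¹ • (e' + u • (y * e'))) =
      (2 : F)⁻¹ • (e' + u • (y * e')) ∧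
    ((2 : F)⁻¹ • (e' - u • (y * e'))) * ((2 : F)⁻¹ • (e' - u • (y * e'))) =
      (2 : F)⁻¹ • (e' - u • (y * e')) ∧
    Module.finrank F (Submodule.span F {e' + u • (y * e')}) = 1 ∧
    Module.finrank F (Submodule.span F {e' - u • (y * e')}) = 1 ∧
    ∀ C : Ideal (MonoidAlgebra F (QuaternionGroup n)), C ≤ Ideal.span {e'} →
      C = ⊥ ∨
      C.restrictScalars F = Submodule.span F {e' + u • (y * e')} ∨
      C.restrictScalars F = Submodule.span F {e' - u • (y * e')} ∨
      C = Ideal.span {e'} := by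
  subst hx hy
  obtain rfl : e' = signIdempotent F n := he'
  obtain ⟨h2, hN⟩ : (2 : F) ≠ 0 ∧ ((2 * n : ℕ) : F) ≠ 0 :=
    mul_ne_zero_iff.1 (by
      rwa [show ((4 * n : ℕ) : F) = 2 * ((2 * n : ℕ) : F) by push_cast; ring] at hchar)
  have hu' : (-u) ^ 2 = -1 := by rw [neg_sq, hu]
  have he := isIdempotentElem_signIdempotent hN
  have hey := commute_signIdempotent hN (of F _ (xa 0))
  have hyy := of_xa_zero_mul_self_mul_signIdempotent (F := F) hno
  rw [sub_eq_add_neg, ← neg_smul]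
  refine ⟨he, fun z => (commute_signIdempotent hN z).eq,
    isIdempotentElem_splitIdempotent h2 he hey hyy hu,
    isIdempotentElem_splitIdempotent h2 he hey hyy hu',
    finrank_span_singleton (signIdempotent_add_smul_ne_zero hN u),
    finrank_span_singleton (signIdempotent_add_smul_ne_zero hN (-u)), fun C hC => ?_⟩
  have hsum : ∀ r ∈ C, splitIdempotent (signIdempotent F n) (of F _ (xa 0)) u * r +
      splitIdempotent (signIdempotent F n) (of F _ (xa 0)) (-u) * r = r := fun r hr => by
    rw [← add_mul, splitIdempotent_add_splitIdempotent_neg h2,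
      mul_eq_self_of_mem_span_singleton he (commute_signIdempotent hN) (hC hr)]
  rcases C.eq_bot_or_restrictScalars_eq_span_singleton
    (exists_splitIdempotent_mul_eq_smul hN hno hu)
    (exists_splitIdempotent_mul_eq_smul hN hno hu') hsum with h | h | h | ⟨h₁, h₂⟩
  · exact Or.inl h
  · exact Or.inr (Or.inl (h.trans (span_splitIdempotent h2)))
  · exact Or.inr (Or.inr (Or.inl (h.trans (span_splitIdempotent h2))))
  · have h := C.add_mem h₁ h₂
    rw [splitIdempotent_add_splitIdempotent_neg h2] at h
    exact Or.inr (Or.inr (Or.inr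
      (le_antisymm hC (Ideal.span_le.2 (Set.singleton_subset_iff.2 h)))))

set_option synthInstance.maxHeartbeats 400000 in
theorem stmt_14 {F : Type*} [Field F] {n : ℕ} (hn : 1 ≤ n) (hno : Odd n)
    (hchar : ((4 * n : ℕ) : F) ≠ 0)
    (u : F) (hu : u ^ 2 = -1)
    (x y e' : MonoidAlgebra F (QuaternionGroup n))
    (hx : x = MonoidAlgebra.of F (QuaternionGroup n) (QuaternionGroup.a 1))
    (hy : y = MonoidAlgebra.of F (QuaternionGroup n) (QuaternionGroup.xa 0))
    (he' : e' = ((2 * n : ℕ) : F)⁻¹ •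
      ∑ i ∈ Finset.range (2 * n), ((-1 : F) ^ i) • x ^ i) :
    e' * e' = e' ∧ (∀ z, e' * z = z * e') ∧
    ((2 : F)⁻¹ • (e' + u • (y * e'))) * ((2 : F)⁻¹ • (e' + u • (y * e'))) =
      (2 : F)⁻¹ • (e' + u • (y * e')) ∧
    ((2 : F)⁻¹ • (e' - u • (y * e'))) * ((2 : F)⁻¹ • (e' - u • (y * e'))) =
      (2 : F)⁻¹ • (e' - u • (y * e')) ∧
    Module.finrank F (Submodule.span F {e' + u • (y * e')}) = 1 ∧
    Module.finrank F (Submodule.span F {e' - u • (y * e')}) = 1 ∧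
    ∀ C : Ideal (MonoidAlgebra F (QuaternionGroup n)), C ≤ Ideal.span {e'} →
      C = ⊥ ∨
      C.restrictScalars F = Submodule.span F {e' + u • (y * e')} ∨
      C.restrictScalars F = Submodule.span F {e' - u • (y * e')} ∨
      C = Ideal.span {e'} :=
  stmt_14_general hno hchar u hu x y e' hx hy he'
end

section
/- Let f be a self-reciprocal monic irreducible divisor of x^{2n} − 1 in F[x], let e_f ∈ F[x]/(x^{2n} − 1) be an idempotent generating the ideal generated by the image of (x^{2n} − 1)/f, and let π : F[x]/(x^{2n} − 1) → F[Q_{4n}] be the F-algebra homomorphism sending the class of x to the group element x. Then π(e_f) is a central idempotent of F[Q_{4n}] and dim_F (F[Q_{4n}]·π(e_f)) = 2·deg f. -/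
/-!
Write `R = F[x]/(x^{2n} - 1)`, `g = (x^{2n} - 1)/f` and `y = xa 0`. Conjugation by `y` acts on
`π(R)` as the involution `x ↦ x⁻¹` of `R`. Since `f` is self-reciprocal and `x^{2n} - 1` is
anti-reciprocal, `g` is self-reciprocal up to a nonzero scalar, so the involution maps the ideal
`(g)` onto itself and hence fixes its unique idempotent generator `e`. Thus `π(e)` commutes with
`π(R)` and with `y`, which together generate `F[Q_{4n}]`.

For the dimension, `(z, z') ↦ π z + y π z'` is onto `F[Q_{4n}]`, hence bijective since both
sides have dimension `4n`. Right multiplication by `π(e)` corresponds to multiplication by `e`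
on each factor, so `F[Q_{4n}] π(e) ≅ Re × Re`, and `dim Re = 2n - deg g = deg f`.
-/

open Polynomial

theorem IsIdempotentElem.eq_of_span_singleton_eq {R : Type*} [CommRing R] {e₁ e₂ : R}
    (h₁ : IsIdempotentElem e₁) (h₂ : IsIdempotentElem e₂)
    (h : Ideal.span {e₁} = Ideal.span {e₂}) : e₁ = e₂ := by
  obtain ⟨c, hc⟩ := Ideal.mem_span_singleton'.mp (h ▸ Ideal.mem_span_singleton_self e₁)
  obtain ⟨d, hd⟩ := Ideal.mem_span_singleton'.mp (h ▸ Ideal.mem_span_singleton_self e₂)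
  calc e₁ = e₂ * e₁ := by rw [← hc, mul_left_comm, h₂.eq]
    _ = e₂ := by rw [← hd, mul_assoc, h₁.eq]

theorem SemiconjBy.aeval {R A : Type*} [CommSemiring R] [Semiring A] [Algebra R A] {u a b : A}
    (h : SemiconjBy u a b) (p : R[X]) : SemiconjBy u (aeval a p) (aeval b p) := by
  induction p using Polynomial.induction_on' with
  | add p q hp hq => simpa using hp.add_right hq
  | monomial n r =>
    simp only [aeval_monomial]
    exact SemiconjBy.mul_right (Algebra.commutes r u).symm (h.pow_right n)

namespace Polynomial

theorem coeff_zero_ne_zero_of_recip_eq {F : Type*} [Field F] {f : F[X]} (h : recip f = f)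
    (hf : f ≠ 0) : f.coeff 0 ≠ 0 :=
  fun h0 => hf (by rw [← h, recip, h0, inv_zero, C_0, zero_mul])

theorem reverse_eq_C_coeff_zero_mul_of_recip_eq {F : Type*} [Field F] {f : F[X]}
    (h : recip f = f) : f.reverse = C (f.coeff 0) * f := by
  rcases eq_or_ne f 0 with rfl | hf
  · simp
  · have h0 := coeff_zero_ne_zero_of_recip_eq h hf
    calc f.reverse = C (f.coeff 0) * (C (f.coeff 0)⁻¹ * f.reverse) := by
          rw [← mul_assoc, ← C_mul, mul_inv_cancel₀ h0, C_1, one_mul]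
      _ = C (f.coeff 0) * f := by rw [← recip, h]

theorem reverse_X_pow_sub_one {R : Type*} [CommRing R] (N : ℕ) :
    (X ^ N - 1 : R[X]).reverse = C (-1) * (X ^ N - 1) := by
  nontriviality R
  have h := reverse_X_pow_mul (1 : R[X]) N
  rw [mul_one, ← C_1, reverse_C] at h
  rw [sub_eq_add_neg, ← C_1, ← C_neg, reverse_add_C, natDegree_X_pow, h]
  simp only [map_neg, C_1]
  ring

theorem reverse_eq_C_mul_of_mul {F : Type*} [Field F] {f g : F[X]} {c d : F} (hf : f ≠ 0)
    (hc : c ≠ 0) (hfc : f.reverse = C c * f) (hfgd : (f * g).reverse = C d * (f * g)) :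
    g.reverse = C (d / c) * g := by
  rw [reverse_mul_of_domain, hfc] at hfgd
  apply mul_left_cancel₀ (mul_ne_zero (C_ne_zero.mpr hc) hf)
  rw [hfgd, show C c * f * (C (d / c) * g) = C (c * (d / c)) * (f * g) by rw [C_mul]; ring,
    mul_div_cancel₀ _ hc]

theorem X_pow_sub_one_ne_zero {R : Type*} [CommRing R] [Nontrivial R] {N : ℕ} (hN : N ≠ 0) :
    (X ^ N - 1 : R[X]) ≠ 0 :=
  X_pow_sub_C_ne_zero (Nat.pos_of_ne_zero hN) 1

theorem natDegree_X_pow_sub_one {R : Type*} [CommRing R] [Nontrivial R] (N : ℕ) :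
    (X ^ N - 1 : R[X]).natDegree = N := by
  rw [← C_1, natDegree_X_pow_sub_C]

theorem finrank_quotient_span_singleton {F : Type*} [Field F] {q : F[X]} (hq : q ≠ 0) :
    Module.finrank F (F[X] ⧸ Ideal.span {q}) = q.natDegree :=
  (AdjoinRoot.powerBasis hq).finrank

theorem finrank_span_mk_add_natDegree {F : Type*} [Field F] {q g : F[X]}
    (hq : q ≠ 0) (hg : g ∣ q) :
    Module.finrank F ((Ideal.span {Ideal.Quotient.mk (Ideal.span {q}) g}).restrictScalars F) +
      g.natDegree = q.natDegree := by
  have hg0 : g ≠ 0 := ne_zero_of_dvd_ne_zero hq hg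
  have hle : Ideal.span {q} ≤ Ideal.span {g} := Ideal.span_singleton_le_span_singleton.mpr hg
  have : Module.Finite F (F[X] ⧸ Ideal.span {q}) := (AdjoinRoot.powerBasis hq).finite
  let J := Ideal.span {Ideal.Quotient.mk (Ideal.span {q}) g}
  have hJ : J = (Ideal.span {g}).map (Ideal.Quotient.mkₐ F (Ideal.span {q})) := by
    rw [Ideal.map_span, Set.image_singleton]; rfl
  have hquot :
      ((F[X] ⧸ Ideal.span {q}) ⧸ J.restrictScalars F) ≃ₗ[F] F[X] ⧸ Ideal.span {g} :=
    (Submodule.Quotient.restrictScalarsEquiv F J).trans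
      ((Ideal.quotientEquivAlgOfEq F hJ).trans
        (DoubleQuot.quotQuotEquivQuotOfLEₐ F hle)).toLinearEquiv
  rw [← finrank_quotient_span_singleton hq, ← finrank_quotient_span_singleton hg0,
    ← hquot.finrank_eq, add_comm]
  exact Submodule.finrank_quotient_add_finrank _

end Polynomial

namespace Rq

variable {F : Type*} [Field F] {N : ℕ}

instance [NeZero N] : FiniteDimensional F (Rq F N) :=
  (AdjoinRoot.powerBasis (X_pow_sub_one_ne_zero (NeZero.ne N))).finite

theorem finrank_eq [NeZero N] : Module.finrank F (Rq F N) = N := by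
  rw [finrank_quotient_span_singleton (X_pow_sub_one_ne_zero (NeZero.ne N)),
    natDegree_X_pow_sub_one]

theorem mkq_X_pow : mkq F N X ^ N = 1 := by
  rw [← map_pow, ← map_one (mkq F N), Ideal.Quotient.eq]
  exact Ideal.mem_span_singleton_self _

theorem mkq_eq_aeval (p : F[X]) : mkq F N p = aeval (mkq F N X) p := by
  simpa using
    (aeval_algHom_apply (Ideal.Quotient.mkₐ F (Ideal.span ({X ^ N - 1} : Set F[X]))) X p).symm

variable (F N) in
noncomputable def inversion : Rq F N →ₐ[F] Rq F N :=
  Ideal.Quotient.liftₐ _ (aeval (mkq F N X ^ (N - 1))) fun p hp => by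
    obtain ⟨p, rfl⟩ := Ideal.mem_span_singleton'.mp hp
    rw [map_mul, map_sub, map_pow, aeval_X, map_one, ← pow_mul, pow_mul', mkq_X_pow,
      one_pow, sub_self, mul_zero]

theorem inversion_mkq (p : F[X]) : inversion F N (mkq F N p) = aeval (mkq F N X ^ (N - 1)) p :=
  rfl

theorem span_inversion_mkq (hN : N ≠ 0) (p : F[X]) :
    Ideal.span {inversion F N (mkq F N p)} = Ideal.span {mkq F N p.reverse} := by
  set x := mkq F N X
  have hx : x ^ (N - 1) * x = 1 := by rw [← pow_succ, Nat.sub_add_cancel (by omega), mkq_X_pow]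
  let _ : Invertible (x ^ (N - 1)) := ⟨x, by rwa [mul_comm], hx⟩
  have h := eval₂_reverse_mul_pow (algebraMap F (Rq F N)) (x ^ (N - 1)) p
  rw [inversion_mkq, aeval_def, ← h, mkq_eq_aeval, aeval_def]
  exact Ideal.span_singleton_mul_right_unit ((isUnit_of_invertible _).pow _) _

theorem inversion_eq_self_of_span_eq (hN : N ≠ 0) {e : Rq F N} (he : IsIdempotentElem e)
    {g : F[X]} {c : F} (hc : c ≠ 0) (hg : g.reverse = C c * g)
    (hspan : Ideal.span {e} = Ideal.span {mkq F N g}) : inversion F N e = e := by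
  refine (he.map (inversion F N)).eq_of_span_singleton_eq he ?_
  calc Ideal.span {inversion F N e} = (Ideal.span {e}).map (inversion F N) := by
        rw [Ideal.map_span, Set.image_singleton]
    _ = Ideal.span {inversion F N (mkq F N g)} := by
        rw [hspan, Ideal.map_span, Set.image_singleton]
    _ = Ideal.span {mkq F N g} := by
        rw [span_inversion_mkq hN, hg, map_mul, mul_comm]
        exact Ideal.span_singleton_mul_right_unit ((isUnit_C.mpr hc.isUnit).map _) _
    _ = Ideal.span {e} := hspan.symm

theorem semiconjBy_algHom {A : Type*} [Semiring A] [Algebra F A] (φ ψ : Rq F N →ₐ[F] A)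
    {u : A}
    (h : SemiconjBy u (φ (mkq F N X)) (ψ (mkq F N X))) (z : Rq F N) :
    SemiconjBy u (φ z) (ψ z) := by
  obtain ⟨p, rfl⟩ := Ideal.Quotient.mk_surjective z
  rw [← mkq, mkq_eq_aeval, ← aeval_algHom_apply, ← aeval_algHom_apply]
  exact h.aeval p

end Rq

theorem finrank_span_eq_two_mul_of_bijective {F R B : Type*} [Field F] [CommRing R]
    [Algebra F R] [Ring B] [Algebra F B] [FiniteDimensional F R] (π : R →ₐ[F] B) (u : B)
    (hπu : Function.Bijective
      (π.toLinearMap.coprod (LinearMap.mulLeft F u ∘ₗ π.toLinearMap)))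
    (e : R) :
    Module.finrank F ((Ideal.span {π e}).restrictScalars F) =
      2 * Module.finrank F ((Ideal.span {e}).restrictScalars F) := by
  set Θ := π.toLinearMap.coprod (LinearMap.mulLeft F u ∘ₗ π.toLinearMap)
  set J := (Ideal.span {e}).restrictScalars F
  have hΘ : ∀ z z' : R, Θ (z, z') = π z + u * π z' := fun _ _ => rfl
  have hrange : (Ideal.span {π e}).restrictScalars F =
      LinearMap.range (Θ ∘ₗ J.subtype.prodMap J.subtype) := by
    ext b
    constructor
    · intro hb
      obtain ⟨c, rfl⟩ := Ideal.mem_span_singleton'.mp hb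
      obtain ⟨⟨z, z'⟩, rfl⟩ := hπu.2 c
      refine ⟨(⟨z * e, Ideal.mul_mem_left _ _ (Ideal.mem_span_singleton_self e)⟩,
        ⟨z' * e, Ideal.mul_mem_left _ _ (Ideal.mem_span_singleton_self e)⟩), ?_⟩
      simp only [LinearMap.comp_apply, LinearMap.prodMap_apply, Submodule.subtype_apply, hΘ,
        map_mul, add_mul, mul_assoc]
    · rintro ⟨⟨⟨_, hz⟩, ⟨_, hz'⟩⟩, rfl⟩
      obtain ⟨a, rfl⟩ := Ideal.mem_span_singleton'.mp hz
      obtain ⟨b, rfl⟩ := Ideal.mem_span_singleton'.mp hz'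
      refine Ideal.mem_span_singleton'.mpr ⟨π a + u * π b, ?_⟩
      simp only [LinearMap.comp_apply, LinearMap.prodMap_apply, Submodule.subtype_apply, hΘ,
        map_mul, add_mul, mul_assoc]
  rw [hrange, LinearMap.finrank_range_of_inj, Module.finrank_prod, two_mul]
  exact hπu.1.comp (J.injective_subtype.prodMap J.injective_subtype)

namespace QuaternionGroup

variable {F : Type*} [Field F] {n : ℕ} [NeZero n]
  {π : Rq F (2 * n) →ₐ[F] MonoidAlgebra F (QuaternionGroup n)}

theorem algHom_mkq_X_pow_val
    (hπ : π (mkq F (2 * n) X) = MonoidAlgebra.of F (QuaternionGroup n) (a 1)) (i : ZMod (2 * n)) :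
    π (mkq F (2 * n) X ^ i.val) = MonoidAlgebra.of F (QuaternionGroup n) (a i) := by
  rw [map_pow, hπ, ← map_pow, a_one_pow, ZMod.natCast_zmod_val]

theorem bijective_algHom_coprod_mulLeft_xa_zero
    (hπ : π (mkq F (2 * n) X) = MonoidAlgebra.of F (QuaternionGroup n) (a 1)) :
    Function.Bijective (π.toLinearMap.coprod
      (LinearMap.mulLeft F (MonoidAlgebra.of F (QuaternionGroup n) (xa 0)) ∘ₗ
        π.toLinearMap)) := by
  set Θ := π.toLinearMap.coprod
      (LinearMap.mulLeft F (MonoidAlgebra.of F (QuaternionGroup n) (xa 0)) ∘ₗ π.toLinearMap)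
  have hsurj : Function.Surjective Θ := by
    rw [← LinearMap.range_eq_top, eq_top_iff]
    rintro z -
    induction z using MonoidAlgebra.induction_on with
    | of g =>
      rcases g with i | i
      · exact ⟨(mkq F (2 * n) X ^ i.val, 0), by simp [Θ, algHom_mkq_X_pow_val hπ]⟩
      · refine ⟨(0, mkq F (2 * n) X ^ i.val), ?_⟩
        simp [Θ, algHom_mkq_X_pow_val hπ]
    | add x y hx hy => exact add_mem hx hy
    | smul c x hx => exact Submodule.smul_mem _ c hx
  have hdim : Module.finrank F (Rq F (2 * n) × Rq F (2 * n)) =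
      Module.finrank F (MonoidAlgebra F (QuaternionGroup n)) := by
    rw [Module.finrank_prod, Rq.finrank_eq,
      (MonoidAlgebra.coeffLinearEquiv F).finrank_eq, Module.finrank_finsupp_self, card]
    ring
  exact ⟨(LinearMap.injective_iff_surjective_of_finrank_eq_finrank hdim).mpr hsurj, hsurj⟩

theorem semiconjBy_xa_zero
    (hπ : π (mkq F (2 * n) X) = MonoidAlgebra.of F (QuaternionGroup n) (a 1)) (z : Rq F (2 * n)) :
    SemiconjBy (MonoidAlgebra.of F (QuaternionGroup n) (xa 0)) (π z)
      (π (Rq.inversion F (2 * n) z)) := by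
  refine Rq.semiconjBy_algHom π (π.comp (Rq.inversion F (2 * n))) ?_ z
  have h := Rq.inversion_mkq (F := F) (N := 2 * n) X
  rw [aeval_X] at h
  rw [AlgHom.comp_apply, h, map_pow, hπ, SemiconjBy, ← map_pow, ← map_mul, ← map_mul,
    a_one_pow, xa_mul_a, a_mul_xa, Nat.cast_sub NeZero.one_le, ZMod.natCast_self]
  simp

theorem commute_algHom_of_inversion_eq
    (hπ : π (mkq F (2 * n) X) = MonoidAlgebra.of F (QuaternionGroup n) (a 1))
    {e : Rq F (2 * n)} (he : Rq.inversion F (2 * n) e = e)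
    (z : MonoidAlgebra F (QuaternionGroup n)) :
    Commute (π e) z := by
  induction z using MonoidAlgebra.induction_on with
  | of g =>
    rcases g with i | i
    · rw [← algHom_mkq_X_pow_val hπ]
      exact (Commute.all _ _).map π
    · have hxa : (xa i : QuaternionGroup n) = xa 0 * a i := by rw [xa_mul_a, zero_add]
      rw [hxa, map_mul, ← algHom_mkq_X_pow_val hπ]
      have hu := semiconjBy_xa_zero hπ e
      rw [he] at hu
      exact Commute.mul_right (Commute.symm hu) ((Commute.all _ _).map π)
  | add x y hx hy => exact hx.add_right hy
  | smul c x hx => exact hx.smul_right c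

end QuaternionGroup

set_option synthInstance.maxHeartbeats 400000 in
theorem stmt_16_general {F : Type*} [Field F] {n : ℕ} (hn : 1 ≤ n)
    (f : F[X]) (hmonic : f.Monic)
    (hdvd : f ∣ X ^ (2 * n) - 1) (hself : recip f = f)
    (e : Rq F (2 * n)) (hidem : e * e = e)
    (hgen : Ideal.span {e} = Ideal.span {mkq F (2 * n) ((X ^ (2 * n) - 1) /ₘ f)})
    (π : Rq F (2 * n) →ₐ[F] MonoidAlgebra F (QuaternionGroup n))
    (hπ : π (mkq F (2 * n) X) =
      MonoidAlgebra.of F (QuaternionGroup n) (QuaternionGroup.a 1)) :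
    π e * π e = π e ∧ (∀ z, π e * z = z * π e) ∧
    Module.finrank F ((Ideal.span {π e}).restrictScalars F) = 2 * f.natDegree := by
  have : NeZero n := ⟨by omega⟩
  set g := (X ^ (2 * n) - 1) /ₘ f
  have hX : (X ^ (2 * n) - 1 : F[X]) ≠ 0 := X_pow_sub_one_ne_zero (NeZero.ne _)
  have hfg : f * g = X ^ (2 * n) - 1 := by
    have h := modByMonic_add_div (X ^ (2 * n) - 1) f
    rwa [(modByMonic_eq_zero_iff_dvd hmonic).mpr hdvd, zero_add] at h
  have hf : f ≠ 0 := hmonic.ne_zero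
  have hc : f.coeff 0 ≠ 0 := coeff_zero_ne_zero_of_recip_eq hself hf
  have hg : g.reverse = C (-1 / f.coeff 0) * g :=
    reverse_eq_C_mul_of_mul hf hc (reverse_eq_C_coeff_zero_mul_of_recip_eq hself)
      (hfg ▸ reverse_X_pow_sub_one _)
  have he : Rq.inversion F (2 * n) e = e :=
    Rq.inversion_eq_self_of_span_eq (NeZero.ne _) hidem (div_ne_zero (by simp) hc) hg hgen
  have hdeg : f.natDegree + g.natDegree = 2 * n := by
    rw [← natDegree_mul hf (right_ne_zero_of_mul (hfg ▸ hX)), hfg, natDegree_X_pow_sub_one]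
  have hdimJ : Module.finrank F ((Ideal.span {e}).restrictScalars F) + g.natDegree = 2 * n := by
    have h := finrank_span_mk_add_natDegree hX (Dvd.intro_left f hfg)
    rwa [← hgen, natDegree_X_pow_sub_one] at h
  refine ⟨by rw [← map_mul, hidem], QuaternionGroup.commute_algHom_of_inversion_eq hπ he, ?_⟩
  rw [finrank_span_eq_two_mul_of_bijective π _
    (QuaternionGroup.bijective_algHom_coprod_mulLeft_xa_zero hπ) e]
  omega

set_option synthInstance.maxHeartbeats 400000 in
theorem stmt_16 {F : Type*} [Field F] {n : ℕ} (hn : 1 ≤ n)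
    (hchar : ((4 * n : ℕ) : F) ≠ 0)
    (f : F[X]) (hmonic : f.Monic) (hirr : Irreducible f)
    (hdvd : f ∣ X ^ (2 * n) - 1) (hself : recip f = f)
    (e : Rq F (2 * n)) (hidem : e * e = e)
    (hgen : Ideal.span {e} = Ideal.span {mkq F (2 * n) ((X ^ (2 * n) - 1) /ₘ f)})
    (π : Rq F (2 * n) →ₐ[F] MonoidAlgebra F (QuaternionGroup n))
    (hπ : π (mkq F (2 * n) X) =
      MonoidAlgebra.of F (QuaternionGroup n) (QuaternionGroup.a 1)) :
    π e * π e = π e ∧ (∀ z, π e * z = z * π e) ∧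
    Module.finrank F ((Ideal.span {π e}).restrictScalars F) = 2 * f.natDegree :=
  stmt_16_general hn f hmonic hdvd hself e hidem hgen π hπ
end
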